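/- arXiv:1207.0640 — 4 statements merged into one kernel-verified Lean document; each statement's English description precedes it below -/
import Mathlib

section
/- The horizontal boundary map ∂̄, sending a tableau t = (t_i^k), 0 ≤ i ≤ k ≤ n, to h = (h_i^k = t_i^k − t_{i-1}^k), 0 < i ≤ k ≤ n, restricts to a bijection (indeed a linear isomorphism) between the set of tableaux in the cone C_2 with t_0^k = 0 for all k and the Gelfand–Zeitlin cone C_GZ defined by the interlacing inequalities. -/
/-- Tableaux in the cone `C₂`, normalized by `t 0 k = 0` and by vanishing
outside the index range `0 ≤ i ≤ k ≤ n`. -/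
def C2Zero (n : ℕ) : Set (ℕ → ℕ → ℝ) :=
  { t | (∀ i k, 0 < i → i ≤ k → k < n →
      t i (k + 1) + t (i - 1) k ≥ t (i - 1) (k + 1) + t i k ∧
      t i (k + 1) + t i k ≥ t (i + 1) (k + 1) + t (i - 1) k) ∧
    (∀ k, t 0 k = 0) ∧
    (∀ i k, (n < k ∨ k < i) → t i k = 0) }

/-- The Gelfand–Zeitlin cone of interlacing arrays `h i k` (`0 < i ≤ k ≤ n`),
normalized by vanishing outside this index range. -/
def GZCone (n : ℕ) : Set (ℕ → ℕ → ℝ) :=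
  { h | (∀ i k, 0 < i → i ≤ k → k < n →
      h i (k + 1) ≥ h i k ∧ h i k ≥ h (i + 1) (k + 1)) ∧
    (∀ i k, (n < k ∨ k < i ∨ i = 0) → h i k = 0) }

/-- The horizontal boundary map `h i k = t i k − t (i-1) k` (on the index
range `0 < i ≤ k ≤ n`, and `0` outside). -/
noncomputable def horizontalBoundary (n : ℕ) (t : ℕ → ℕ → ℝ) : ℕ → ℕ → ℝ :=
  fun i k => if 1 ≤ i ∧ i ≤ k ∧ k ≤ n then t i k - t (i - 1) k else 0

/-! The inverse of `∂̄` takes partial row sums `t i k = h 1 k + ⋯ + h i k`. Under this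
substitution the two `C₂` inequalities at `(i, k)` telescope to the two interlacing
inequalities `h i (k+1) ≥ h i k ≥ h (i+1) (k+1)`, so the cones correspond. -/

noncomputable def rowPartialSum (n : ℕ) (h : ℕ → ℕ → ℝ) : ℕ → ℕ → ℝ :=
  fun i k => if i ≤ k ∧ k ≤ n then ∑ j ∈ Finset.Icc 1 i, h j k else 0

section

variable {n : ℕ}

theorem horizontalBoundary_succ (t : ℕ → ℕ → ℝ) {i k : ℕ} (hik : i + 1 ≤ k) (hk : k ≤ n) :
    horizontalBoundary n t (i + 1) k = t (i + 1) k - t i k := by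
  simp [horizontalBoundary, hik, hk]

theorem horizontalBoundary_of_not_mem (t : ℕ → ℕ → ℝ) {i k : ℕ}
    (hik : ¬(1 ≤ i ∧ i ≤ k ∧ k ≤ n)) : horizontalBoundary n t i k = 0 :=
  if_neg hik

theorem horizontalBoundary_smul_add (t₁ t₂ : ℕ → ℕ → ℝ) (c : ℝ) :
    horizontalBoundary n (fun i k => c * t₁ i k + t₂ i k) =
      fun i k => c * horizontalBoundary n t₁ i k + horizontalBoundary n t₂ i k := by
  funext i k
  simp only [horizontalBoundary]
  split_ifs <;> ring

theorem rowPartialSum_zero (h : ℕ → ℕ → ℝ) (k : ℕ) : rowPartialSum n h 0 k = 0 := by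
  simp [rowPartialSum]

theorem rowPartialSum_succ (h : ℕ → ℕ → ℝ) {i k : ℕ} (hik : i + 1 ≤ k) (hk : k ≤ n) :
    rowPartialSum n h (i + 1) k = rowPartialSum n h i k + h (i + 1) k := by
  simp only [rowPartialSum, if_pos (And.intro hik hk), if_pos (And.intro (by omega : i ≤ k) hk)]
  exact Finset.sum_Icc_succ_top (Nat.le_add_left 1 i) _

theorem rowPartialSum_of_not_mem (h : ℕ → ℕ → ℝ) {i k : ℕ} (hik : ¬(i ≤ k ∧ k ≤ n)) :
    rowPartialSum n h i k = 0 :=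
  if_neg hik

theorem horizontalBoundary_mapsTo : Set.MapsTo (horizontalBoundary n) (C2Zero n) (GZCone n) := by
  rintro t ⟨hC2, -, -⟩
  refine ⟨fun i k hi hik hkn => ?_, fun i k hout => horizontalBoundary_of_not_mem t (by omega)⟩
  obtain ⟨j, rfl⟩ : ∃ j, i = j + 1 := ⟨i - 1, by omega⟩
  have hq := hC2 (j + 1) k hi hik hkn
  simp only [Nat.add_sub_cancel] at hq
  rw [horizontalBoundary_succ t (by omega : j + 1 ≤ k + 1) hkn,
    horizontalBoundary_succ t hik hkn.le, horizontalBoundary_succ t (by omega : j + 2 ≤ k + 1) hkn]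
  constructor <;> linarith [hq.1, hq.2]

theorem rowPartialSum_mapsTo : Set.MapsTo (rowPartialSum n) (GZCone n) (C2Zero n) := by
  rintro h ⟨hGZ, -⟩
  refine ⟨fun i k hi hik hkn => ?_, rowPartialSum_zero h,
    fun i k hout => rowPartialSum_of_not_mem h (by omega)⟩
  obtain ⟨j, rfl⟩ : ∃ j, i = j + 1 := ⟨i - 1, by omega⟩
  have hq := hGZ (j + 1) k hi hik hkn
  simp only [Nat.add_sub_cancel]
  rw [rowPartialSum_succ h (by omega : j + 2 ≤ k + 1) hkn,
    rowPartialSum_succ h (by omega : j + 1 ≤ k + 1) hkn, rowPartialSum_succ h hik hkn.le]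
  constructor <;> linarith [hq.1, hq.2]

theorem rowPartialSum_horizontalBoundary {t : ℕ → ℕ → ℝ} (ht : t ∈ C2Zero n) :
    rowPartialSum n (horizontalBoundary n t) = t := by
  obtain ⟨-, h0, hout⟩ := ht
  funext i k
  by_cases hk : i ≤ k ∧ k ≤ n
  · obtain ⟨hik, hkn⟩ := hk
    induction i with
    | zero => rw [rowPartialSum_zero, h0]
    | succ j ih =>
      rw [rowPartialSum_succ _ hik hkn, ih (by omega), horizontalBoundary_succ t hik hkn]
      ring
  · rw [rowPartialSum_of_not_mem _ hk, hout i k (by omega)]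

theorem horizontalBoundary_rowPartialSum {h : ℕ → ℕ → ℝ} (hh : h ∈ GZCone n) :
    horizontalBoundary n (rowPartialSum n h) = h := by
  funext i k
  by_cases hik : 1 ≤ i ∧ i ≤ k ∧ k ≤ n
  · obtain ⟨j, rfl⟩ : ∃ j, i = j + 1 := ⟨i - 1, by omega⟩
    rw [horizontalBoundary_succ _ hik.2.1 hik.2.2, rowPartialSum_succ h hik.2.1 hik.2.2]
    ring
  · rw [horizontalBoundary_of_not_mem _ hik, hh.2 i k (by omega)]

end

theorem horizontalBoundary_bijOn_general (n : ℕ) :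
    Set.BijOn (horizontalBoundary n) (C2Zero n) (GZCone n) ∧
    (∀ (t₁ t₂ : ℕ → ℕ → ℝ) (c : ℝ),
      horizontalBoundary n (fun i k => c * t₁ i k + t₂ i k) =
        fun i k => c * horizontalBoundary n t₁ i k + horizontalBoundary n t₂ i k) :=
  ⟨Set.InvOn.bijOn ⟨fun _ ht => rowPartialSum_horizontalBoundary ht,
      fun _ hh => horizontalBoundary_rowPartialSum hh⟩
    horizontalBoundary_mapsTo rowPartialSum_mapsTo,
    horizontalBoundary_smul_add⟩

/-- The horizontal boundary map is linear and restricts to a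
bijection between the normalized cone `C₂ ∩ {t 0 k = 0}` and the
Gelfand–Zeitlin cone of interlacing arrays. -/
theorem horizontalBoundary_bijOn (n : ℕ) (hn : 0 < n) :
    Set.BijOn (horizontalBoundary n) (C2Zero n) (GZCone n) ∧
    (∀ (t₁ t₂ : ℕ → ℕ → ℝ) (c : ℝ),
      horizontalBoundary n (fun i k => c * t₁ i k + t₂ i k) =
        fun i k => c * horizontalBoundary n t₁ i k + horizontalBoundary n t₂ i k) :=
  horizontalBoundary_bijOn_general n
end

section
/- Let f_1 < f_2 < ... < f_{i-1} and g_1 < g_2 < ... < g_i be continuous real-valued functions on an interval [a,b] (strict inequalities pointwise within each family). For x ∈ [a,b], let σ_1(x) ≥ σ_2(x) ≥ ... ≥ σ_{2i-1}(x) be the decreasing rearrangement of the multiset {f_1(x),...,f_{i-1}(x), g_1(x),...,g_i(x)}. Then each σ_j is continuous, σ_{j}(x) > σ_{j+2}(x) for all x and j ≤ 2i−3 (so the even-indexed functions form a strictly increasing (i−1)-family and the odd-indexed ones a strictly increasing i-family), and Σ_j σ_j(x) = Σ_j f_j(x) + Σ_j g_j(x) for all x. -/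
/-!
Pointwise, `t ≤ σ j x` holds exactly when at least `j + 1` of the values `f k x`, `g k x` are
`≥ t`. The same counting property characterizes the max-min expression "largest, over
`(j+1)`-element subfamilies, of the pointwise minimum of the subfamily", which is continuous as a
finite max of finite mins of continuous functions; hence `σ j` is continuous. Each family is
strictly increasing, so a value occurs at most twice among all the `f k x`, `g k x`; therefore no
three consecutive `σ`'s can coincide, i.e. `σ (j + 2) x < σ j x`.
-/

open Finset

namespace Finset

variable {ι α : Type*}

theorem countP_map_val (s : Finset ι) (w : ι → α) (p : α → Prop) [DecidablePred p] :
    (s.val.map w).countP p = #{k ∈ s | p (w k)} :=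
  Multiset.countP_map _ _ _

variable [LinearOrder α]

/-- The `j`-th largest value of `w` on `s`, counted from `0` and with multiplicity (see
`le_nthLargest_iff`), written as a max-min so that continuity is evident. -/
noncomputable def nthLargest (s : Finset ι) (w : ι → α) (j : ℕ) (hj : j < #s) : α :=
  (s.powersetCard (j + 1)).attach.sup' (attach_nonempty_iff.2 (powersetCard_nonempty.2 hj))
    fun S => S.1.inf' (card_pos.1 <| by rw [(mem_powersetCard.1 S.2).2]; omega) w

theorem le_nthLargest_iff {s : Finset ι} {w : ι → α} {j : ℕ} {hj : j < #s} {t : α} :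
    t ≤ s.nthLargest w j hj ↔ j + 1 ≤ #{k ∈ s | t ≤ w k} := by
  simp only [nthLargest, le_sup'_iff, le_inf'_iff, mem_attach, true_and, Subtype.exists,
    mem_powersetCard]
  constructor
  · rintro ⟨S, ⟨hSs, hS⟩, hle⟩
    exact hS ▸ card_le_card fun k hk => mem_filter.2 ⟨hSs hk, hle k hk⟩
  · intro h
    obtain ⟨S, hS, hcard⟩ := exists_subset_card_eq h
    exact ⟨S, ⟨hS.trans (filter_subset _ _), hcard⟩, fun k hk => (mem_filter.1 (hS hk)).2⟩

theorem continuousOn_nthLargest [TopologicalSpace α] [OrderClosedTopology α] {X : Type*}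
    [TopologicalSpace X] {D : Set X} {s : Finset ι} {w : ι → X → α} {j : ℕ} (hj : j < #s)
    (hw : ∀ k ∈ s, ContinuousOn (w k) D) :
    ContinuousOn (fun x => s.nthLargest (w · x) j hj) D :=
  ContinuousOn.finset_sup'_apply _ fun S _ =>
    ContinuousOn.finset_inf'_apply _ fun k hk => hw k ((mem_powersetCard.1 S.2).1 hk)

end Finset

theorem Multiset.count_add_le_two_of_nodup {α : Type*} [DecidableEq α] {s t : Multiset α}
    (hs : s.Nodup) (ht : t.Nodup) (v : α) : (s + t).count v ≤ 2 := by
  rw [count_add]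
  have := nodup_iff_count_le_one.1 hs v
  have := nodup_iff_count_le_one.1 ht v
  omega

theorem StrictMonoOn.nodup_map_range {α : Type*} [Preorder α] {f : ℕ → α} {n : ℕ}
    (hf : StrictMonoOn f (Set.Iio n)) : ((Multiset.range n).map f).Nodup :=
  (Multiset.nodup_range n).map_on fun _ ha _ hb h =>
    hf.injOn (Multiset.mem_range.1 ha) (Multiset.mem_range.1 hb) h

namespace AntitoneOn

variable {α : Type*} [LinearOrder α] {σ : ℕ → α} {n j : ℕ}

theorem le_iff_succ_le_card_filter (hσ : AntitoneOn σ (Set.Iio n)) (hj : j < n) {t : α} :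
    t ≤ σ j ↔ j + 1 ≤ #{k ∈ range n | t ≤ σ k} := by
  constructor
  · intro h
    calc j + 1 = #(range (j + 1)) := (card_range _).symm
      _ ≤ _ := card_le_card fun k hk => by
        have hkj : k ≤ j := Nat.lt_succ_iff.1 (mem_range.1 hk)
        exact mem_filter.2 ⟨mem_range.2 (hkj.trans_lt hj), h.trans (hσ (hkj.trans_lt hj) hj hkj)⟩
  · intro h
    by_contra! hlt
    have hsub : {k ∈ range n | t ≤ σ k} ⊆ range j := fun k hk => by
      obtain ⟨hkn, htk⟩ := mem_filter.1 hk
      by_contra! hjk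
      exact (htk.trans (hσ hj (mem_range.1 hkn) (not_lt.1 (mt mem_range.2 hjk)))).not_gt hlt
    simpa using (card_le_card hsub).trans_lt' h

theorem lt_of_count_le_two [DecidableEq α] (hσ : AntitoneOn σ (Set.Iio n))
    (hcount : ∀ v, ((Multiset.range n).map σ).count v ≤ 2) (hj : j + 2 < n) :
    σ (j + 2) < σ j := by
  by_contra! h
  have hj₀ : j < n := by omega
  have hj₁ : j + 1 < n := by omega
  have h₁ : σ (j + 1) = σ j :=
    le_antisymm (hσ hj₀ hj₁ j.le_succ) (h.trans (hσ hj₁ hj (j + 1).le_succ))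
  have h₂ : σ (j + 2) = σ j := le_antisymm (hσ hj₀ hj (by omega)) h
  have hle : (Multiset.range (j + 3)).map σ ≤ (Multiset.range n).map σ :=
    Multiset.map_le_map (Multiset.range_le.2 hj)
  have := (Multiset.count_le_of_le (σ j) hle).trans (hcount (σ j))
  simp [Multiset.range_succ, h₁, h₂] at this

end AntitoneOn

theorem sorting_construction_general (i : ℕ) (a b : ℝ)
    (f g σ : ℕ → ℝ → ℝ)
    (hfc : ∀ j, j < i - 1 → ContinuousOn (f j) (Set.Icc a b))
    (hgc : ∀ j, j < i → ContinuousOn (g j) (Set.Icc a b))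
    (hford : ∀ x ∈ Set.Icc a b, ∀ j j', j < j' → j' < i - 1 → f j x < f j' x)
    (hgord : ∀ x ∈ Set.Icc a b, ∀ j j', j < j' → j' < i → g j x < g j' x)
    (hσmult : ∀ x ∈ Set.Icc a b,
      (Multiset.range (2 * i - 1)).map (fun j => σ j x) =
        (Multiset.range (i - 1)).map (fun j => f j x) +
        (Multiset.range i).map (fun j => g j x))
    (hσdec : ∀ x ∈ Set.Icc a b, ∀ j j', j ≤ j' → j' < 2 * i - 1 →
      σ j' x ≤ σ j x) :
    (∀ j, j < 2 * i - 1 → ContinuousOn (σ j) (Set.Icc a b)) ∧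
    (∀ x ∈ Set.Icc a b, ∀ j, j + 2 < 2 * i - 1 → σ (j + 2) x < σ j x) ∧
    (∀ x ∈ Set.Icc a b,
      ∑ j ∈ Finset.range (2 * i - 1), σ j x =
        (∑ j ∈ Finset.range (i - 1), f j x) +
        ∑ j ∈ Finset.range i, g j x) := by
  classical
  set s := (range (i - 1)).disjSum (range i)
  have hσanti : ∀ x ∈ Set.Icc a b, AntitoneOn (σ · x) (Set.Iio (2 * i - 1)) :=
    fun x hx j _ j' hj' h => hσdec x hx j j' h hj'
  refine ⟨fun j hj => ?_, fun x hx j hj => ?_, fun x hx => ?_⟩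
  · have hjs : j < #s := by simp [s]; omega
    have hw : ∀ k ∈ s, ContinuousOn (Sum.elim f g k) (Set.Icc a b) := by
      rintro (k | k) hk <;> simp only [s, inl_mem_disjSum, inr_mem_disjSum, mem_range] at hk
      exacts [hfc k hk, hgc k hk]
    refine (continuousOn_nthLargest hjs hw).congr fun x hx => eq_of_forall_le_iff fun t => ?_
    rw [(hσanti x hx).le_iff_succ_le_card_filter hj, le_nthLargest_iff, ← countP_map_val,
      ← countP_map_val, range_val, hσmult x hx, val_disjSum, Multiset.map_disjSum]
    rfl
  · refine (hσanti x hx).lt_of_count_le_two (fun v => ?_) hj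
    rw [hσmult x hx]
    exact Multiset.count_add_le_two_of_nodup
      (StrictMonoOn.nodup_map_range fun j _ j' hj' h => hford x hx j j' h hj')
      (StrictMonoOn.nodup_map_range fun j _ j' hj' h => hgord x hx j j' h hj') v
  · simpa [sum_eq_multiset_sum] using congrArg Multiset.sum (hσmult x hx)

/-- the sorting construction.  Let `f 0 < ⋯ < f (i-2)` and
`g 0 < ⋯ < g (i-1)` be two families of continuous functions on `[a, b]`,
strictly ordered pointwise within each family, and let
`σ 0 ≥ σ 1 ≥ ⋯ ≥ σ (2i-2)` be the pointwise decreasing rearrangement of the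
combined family (characterized by pointwise equality of multisets of values
together with pointwise monotonicity in the index).  Then each `σ j` is
continuous on `[a, b]`, the rearrangement satisfies the strict inequalities
`σ j > σ (j+2)` pointwise (so the even-indexed functions form a strictly
ordered `(i-1)`-family and the odd-indexed ones a strictly ordered
`i`-family), and the sum of the `σ j` equals the sum of the `f`'s and `g`'s
pointwise. -/
theorem sorting_construction (i : ℕ) (hi : 1 ≤ i) (a b : ℝ) (hab : a ≤ b)
    (f g σ : ℕ → ℝ → ℝ)
    (hfc : ∀ j, j < i - 1 → ContinuousOn (f j) (Set.Icc a b))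
    (hgc : ∀ j, j < i → ContinuousOn (g j) (Set.Icc a b))
    (hford : ∀ x ∈ Set.Icc a b, ∀ j j', j < j' → j' < i - 1 → f j x < f j' x)
    (hgord : ∀ x ∈ Set.Icc a b, ∀ j j', j < j' → j' < i → g j x < g j' x)
    (hσmult : ∀ x ∈ Set.Icc a b,
      (Multiset.range (2 * i - 1)).map (fun j => σ j x) =
        (Multiset.range (i - 1)).map (fun j => f j x) +
        (Multiset.range i).map (fun j => g j x))
    (hσdec : ∀ x ∈ Set.Icc a b, ∀ j j', j ≤ j' → j' < 2 * i - 1 →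
      σ j' x ≤ σ j x) :
    (∀ j, j < 2 * i - 1 → ContinuousOn (σ j) (Set.Icc a b)) ∧
    (∀ x ∈ Set.Icc a b, ∀ j, j + 2 < 2 * i - 1 → σ (j + 2) x < σ j x) ∧
    (∀ x ∈ Set.Icc a b,
      ∑ j ∈ Finset.range (2 * i - 1), σ j x =
        (∑ j ∈ Finset.range (i - 1), f j x) +
        ∑ j ∈ Finset.range i, g j x) :=
  sorting_construction_general i a b f g σ hfc hgc hford hgord hσmult hσdec
end

section
/- Interlacing of tropical eigenvalues: in the setting of a rank-n weighted planar network Γ, define λ_i^{(k)} = l_iΓ^{(k)}(ε) − l_{i-1}Γ^{(k)}(ε) whenever these are finite. Then λ_i^{(k+1)} ≥ λ_i^{(k)} ≥ λ_{i+1}^{(k+1)} for all 0 < i ≤ k < n. -/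
open scoped BigOperators

/-- A planar network: a finite graph embedded in the vertical strip
`{a ≤ x ≤ b}` with straight-line, non-vertical edges, oriented from left to
right; edge segments meet only at common endpoints, and no vertex lies in the
interior of an edge. -/
structure PlanarNetwork where
  a : ℝ
  b : ℝ
  hab : a < b
  V : Finset (ℝ × ℝ)
  E : Finset ((ℝ × ℝ) × (ℝ × ℝ))
  strip : ∀ p ∈ V, a ≤ p.1 ∧ p.1 ≤ b
  ends : ∀ e ∈ E, e.1 ∈ V ∧ e.2 ∈ V ∧ e.1.1 < e.2.1
  embed : ∀ e ∈ E, ∀ f ∈ E, e ≠ f →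
    ∀ x ∈ openSegment ℝ e.1 e.2, x ∉ segment ℝ f.1 f.2
  embedV : ∀ e ∈ E, ∀ p ∈ V, p ∉ openSegment ℝ e.1 e.2

/-- The network has `n` sources on the left boundary and `n` sinks on the
right boundary, at heights `1, …, n`. -/
def PlanarNetwork.HasRank (Γ : PlanarNetwork) (n : ℕ) : Prop :=
  (∀ p ∈ Γ.V, p.1 = Γ.a → ∃ j : ℕ, 1 ≤ j ∧ j ≤ n ∧ p.2 = (j : ℝ)) ∧
  (∀ p ∈ Γ.V, p.1 = Γ.b → ∃ j : ℕ, 1 ≤ j ∧ j ≤ n ∧ p.2 = (j : ℝ)) ∧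
  (∀ j : ℕ, 1 ≤ j → j ≤ n →
    (Γ.a, (j : ℝ)) ∈ Γ.V ∧ (Γ.b, (j : ℝ)) ∈ Γ.V)

/-- The weight of a path (recorded as the list of its vertices): the sum of
the weights of its edges. -/
def pathWeight {α : Type*} [AddCommMonoid α]
    (ε : (ℝ × ℝ) × (ℝ × ℝ) → α) (L : List (ℝ × ℝ)) : α :=
  ((L.zip L.tail).map ε).sum

/-- `L` is a directed path in `Γ` from `p` to `q`. -/
def IsPathBetween (Γ : PlanarNetwork) (p q : ℝ × ℝ) (L : List (ℝ × ℝ)) : Prop :=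
  L ≠ [] ∧ List.Chain' (fun u v => (u, v) ∈ Γ.E) L ∧
    L.head? = some p ∧ L.getLast? = some q

/-- `L` is a directed path in `Γ` from a source to a sink. -/
def IsThroughPath (Γ : PlanarNetwork) (L : List (ℝ × ℝ)) : Prop :=
  ∃ p q, IsPathBetween Γ p q L ∧ p.1 = Γ.a ∧ q.1 = Γ.b

/-- `L` is a source-to-sink path of the subnetwork `Γ^{(k)}` (both endpoints
at height at most `k`). -/
def IsBoundedPath (Γ : PlanarNetwork) (k : ℕ) (L : List (ℝ × ℝ)) : Prop :=
  ∃ p q, IsPathBetween Γ p q L ∧ p.1 = Γ.a ∧ q.1 = Γ.b ∧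
    p.2 ≤ (k : ℝ) ∧ q.2 ≤ (k : ℝ)

/-- Pairwise vertex-disjointness of a family of paths. -/
def PairwiseVertexDisjoint {m : ℕ} (F : Fin m → List (ℝ × ℝ)) : Prop :=
  ∀ j j', j ≠ j' → ∀ v ∈ F j, v ∉ F j'

/-- The set of total weights of `i`-multipaths of `Γ^{(k)}`. -/
def boundedWeights (Γ : PlanarNetwork) (ε : (ℝ × ℝ) × (ℝ × ℝ) → ℝ)
    (i k : ℕ) : Set ℝ :=
  { x | ∃ F : Fin i → List (ℝ × ℝ),
      (∀ j, IsBoundedPath Γ k (F j)) ∧ PairwiseVertexDisjoint F ∧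
      x = ∑ j, pathWeight ε (F j) }

/-!
A path of `Γ` is the graph of a continuous piecewise-linear function `pathHeight` across the
strip. By planarity two paths meet only at common vertices or along common edges, so cutting two
paths at their common interior vertices shows that their pointwise minimum and maximum are again
paths, of the same total weight. Sorting with this comparator the union of a multipath of
`Γ^{(k)}` and one of `Γ^{(k+1)}` lists the paths from bottom to top in such a way that paths two
apart are disjoint and only the topmost one can end at height `k + 1`; so the even- and the
odd-numbered paths form multipaths again. Applied to multipaths of sizes `(i, i - 1)` and
`(i + 1, i - 1)` this gives
`l_i Γ^{(k)} + l_{i-1} Γ^{(k+1)} ≤ l_i Γ^{(k+1)} + l_{i-1} Γ^{(k)}` and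
`l_{i+1} Γ^{(k+1)} + l_{i-1} Γ^{(k)} ≤ l_i Γ^{(k)} + l_i Γ^{(k+1)}`,
which are the two interlacing inequalities.
-/

open Set

noncomputable def lineThrough (u v : ℝ × ℝ) (x : ℝ) : ℝ :=
  u.2 + (x - u.1) * ((v.2 - u.2) / (v.1 - u.1))

/-- The polygonal line through the vertices of `L` as the graph of a function of the abscissa,
extended by constants beyond the first and last vertex. -/
noncomputable def pathHeight : List (ℝ × ℝ) → ℝ → ℝ
  | [], _ => 0
  | [u], _ => u.2
  | u :: v :: t, x => if x ≤ v.1 then lineThrough u v (max x u.1) else pathHeight (v :: t) x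

def pathEdges (L : List (ℝ × ℝ)) : List ((ℝ × ℝ) × (ℝ × ℝ)) := L.zip L.tail

lemma lineThrough_left (u v : ℝ × ℝ) : lineThrough u v u.1 = u.2 := by simp [lineThrough]

lemma lineThrough_right {u v : ℝ × ℝ} (h : u.1 < v.1) : lineThrough u v v.1 = v.2 := by
  simp only [lineThrough]
  rw [mul_div_cancel₀ _ (sub_ne_zero.2 h.ne')]
  ring

lemma mem_segment_iff_lineThrough {u v z : ℝ × ℝ} (h : u.1 < v.1) :
    z ∈ segment ℝ u v ↔ z.1 ∈ Icc u.1 v.1 ∧ z.2 = lineThrough u v z.1 := by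
  have hvu : v.1 - u.1 ≠ 0 := sub_ne_zero.2 h.ne'
  rw [segment_eq_image']
  constructor
  · rintro ⟨θ, ⟨h0, h1⟩, rfl⟩
    simp only [Prod.fst_add, Prod.smul_fst, Prod.fst_sub, Prod.snd_add, Prod.smul_snd,
      Prod.snd_sub, smul_eq_mul, lineThrough]
    refine ⟨⟨by nlinarith, by nlinarith⟩, ?_⟩
    field_simp
    ring
  · rintro ⟨⟨hx1, hx2⟩, hz⟩
    refine ⟨(z.1 - u.1) / (v.1 - u.1), ⟨div_nonneg (by linarith) (by linarith),
      (div_le_one (by linarith)).2 (by linarith)⟩, Prod.ext ?_ ?_⟩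
    · simp only [Prod.fst_add, Prod.smul_fst, Prod.fst_sub, smul_eq_mul]
      field_simp
      ring
    · simp only [Prod.snd_add, Prod.smul_snd, Prod.snd_sub, smul_eq_mul, hz, lineThrough]
      field_simp

lemma pathHeight_cons_of_le {u : ℝ × ℝ} {t : List (ℝ × ℝ)} (hL : (u :: t).IsChain (·.1 < ·.1))
    {x : ℝ} (hx : x ≤ u.1) : pathHeight (u :: t) x = u.2 := by
  rcases t with _ | ⟨v, t⟩
  · rfl
  · have huv := (List.isChain_cons_cons.1 hL).1
    simp [pathHeight, hx.trans huv.le, max_eq_right hx, lineThrough_left]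

lemma pathHeight_append_cons_of_le {l : List (ℝ × ℝ)} {v : ℝ × ℝ} {t : List (ℝ × ℝ)}
    (hL : (l ++ v :: t).IsChain (·.1 < ·.1)) {x : ℝ} (hx : x ≤ v.1) :
    pathHeight (l ++ v :: t) x = pathHeight (l ++ [v]) x := by
  induction l with
  | nil => simp [pathHeight_cons_of_le hL hx, pathHeight]
  | cons u l ih =>
    rcases l with _ | ⟨w, l⟩
    · simp [pathHeight, hx]
    · simp only [List.cons_append, List.isChain_cons_cons] at hL ih ⊢
      simp only [pathHeight, ih hL.2]

lemma pathHeight_append_cons_of_ge {l : List (ℝ × ℝ)} {v : ℝ × ℝ} {t : List (ℝ × ℝ)}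
    (hL : (l ++ v :: t).IsChain (·.1 < ·.1)) {x : ℝ} (hx : v.1 ≤ x) :
    pathHeight (l ++ v :: t) x = pathHeight (v :: t) x := by
  induction l with
  | nil => rfl
  | cons u l ih =>
    rcases l with _ | ⟨w, l⟩
    · have huv := (List.isChain_cons_cons.1 hL).1
      rcases hx.eq_or_lt with rfl | hx
      · simp [pathHeight, max_eq_left huv.le, lineThrough_right huv,
          pathHeight_cons_of_le hL.tail le_rfl]
      · simp [pathHeight, hx.not_ge]
    · simp only [List.cons_append, List.isChain_cons_cons] at hL ih ⊢
      have hwv : w.1 < v.1 :=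
        List.rel_of_pairwise_cons (List.isChain_iff_pairwise.1 hL.2) (by simp)
      simp only [pathHeight, (hwv.trans_le hx).not_ge, if_false]
      exact ih hL.2

lemma pathHeight_append_cons {l : List (ℝ × ℝ)} {v : ℝ × ℝ} {t : List (ℝ × ℝ)}
    (hL : (l ++ v :: t).IsChain (·.1 < ·.1)) (x : ℝ) :
    pathHeight (l ++ v :: t) x =
      if x ≤ v.1 then pathHeight (l ++ [v]) x else pathHeight (v :: t) x := by
  split_ifs with hx
  exacts [pathHeight_append_cons_of_le hL hx, pathHeight_append_cons_of_ge hL (not_le.1 hx).le]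

lemma mem_pathEdges_iff {L : List (ℝ × ℝ)} {e : (ℝ × ℝ) × (ℝ × ℝ)} :
    e ∈ pathEdges L ↔ ∃ l₁ l₂, L = l₁ ++ e.1 :: e.2 :: l₂ := by
  induction L with
  | nil => simp [pathEdges]
  | cons u L ih =>
    rcases L with _ | ⟨v, t⟩
    · simp only [pathEdges, List.tail_cons, List.zip_nil_right, List.not_mem_nil, false_iff]
      rintro ⟨l₁, l₂, h⟩
      have := congrArg List.length h
      simp at this
      omega
    · have : pathEdges (u :: v :: t) = (u, v) :: pathEdges (v :: t) := rfl
      rw [this, List.mem_cons, ih]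
      constructor
      · rintro (rfl | ⟨l₁, l₂, h⟩)
        · exact ⟨[], t, rfl⟩
        · exact ⟨u :: l₁, l₂, by rw [h]; rfl⟩
      · rintro ⟨_ | ⟨w, l₁⟩, l₂, h⟩
        · simp only [List.nil_append, List.cons.injEq] at h
          exact Or.inl (Prod.ext h.1.symm h.2.1.symm)
        · simp only [List.cons_append, List.cons.injEq] at h
          exact Or.inr ⟨l₁, l₂, h.2⟩

lemma mem_of_mem_pathEdges {L : List (ℝ × ℝ)} {e : (ℝ × ℝ) × (ℝ × ℝ)} (he : e ∈ pathEdges L) :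
    e.1 ∈ L ∧ e.2 ∈ L := by
  obtain ⟨l, t, rfl⟩ := mem_pathEdges_iff.1 he
  simp

lemma pathHeight_of_mem {L : List (ℝ × ℝ)} (hL : L.IsChain (·.1 < ·.1)) {v : ℝ × ℝ}
    (hv : v ∈ L) : pathHeight L v.1 = v.2 := by
  obtain ⟨l, t, rfl⟩ := List.append_of_mem hv
  rw [pathHeight_append_cons_of_ge hL le_rfl,
    pathHeight_cons_of_le (List.IsChain.right_of_append hL) le_rfl]

lemma pathHeight_of_mem_pathEdges {L : List (ℝ × ℝ)} (hL : L.IsChain (·.1 < ·.1))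
    {e : (ℝ × ℝ) × (ℝ × ℝ)} (he : e ∈ pathEdges L) {x : ℝ} (hx : x ∈ Icc e.1.1 e.2.1) :
    pathHeight L x = lineThrough e.1 e.2 x := by
  obtain ⟨l, t, rfl⟩ := mem_pathEdges_iff.1 he
  rw [pathHeight_append_cons_of_ge hL hx.1]
  simp [pathHeight, hx.2, max_eq_left hx.1]

lemma rel_of_mem_pathEdges {L : List (ℝ × ℝ)} {R : ℝ × ℝ → ℝ × ℝ → Prop} (hL : L.IsChain R)
    {e : (ℝ × ℝ) × (ℝ × ℝ)} (he : e ∈ pathEdges L) : R e.1 e.2 := by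
  obtain ⟨l, t, rfl⟩ := mem_pathEdges_iff.1 he
  exact List.isChain_iff_forall_rel_of_append_cons_cons.1 hL rfl

lemma exists_mem_pathEdges_of_mem_Icc :
    ∀ {L : List (ℝ × ℝ)} {p q : ℝ × ℝ}, L.head? = some p → L.getLast? = some q → p.1 < q.1 →
      ∀ x ∈ Icc p.1 q.1, ∃ e ∈ pathEdges L, x ∈ Icc e.1.1 e.2.1
  | [], _, _, hp, _, _, _, _ => by simp at hp
  | [u], p, q, hp, hq, hpq, _, _ => by
    simp only [List.head?_cons, List.getLast?_singleton, Option.some.injEq] at hp hq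
    subst hp hq
    exact absurd hpq (lt_irrefl _)
  | u :: w :: s, p, q, hp, hq, hpq, x, hx => by
    simp only [List.head?_cons, Option.some.injEq] at hp
    subst hp
    have hedges : pathEdges (u :: w :: s) = (u, w) :: pathEdges (w :: s) := rfl
    by_cases hxw : x ≤ w.1
    · exact ⟨(u, w), by simp [hedges], hx.1, hxw⟩
    · rw [not_le] at hxw
      obtain ⟨e, he, hxe⟩ := exists_mem_pathEdges_of_mem_Icc (L := w :: s) rfl
        (by rwa [List.getLast?_cons_cons] at hq) (hxw.trans_le hx.2) x ⟨hxw.le, hx.2⟩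
      exact ⟨e, by simp [hedges, he], hxe⟩

lemma continuous_pathHeight : ∀ {L : List (ℝ × ℝ)}, L.IsChain (·.1 < ·.1) →
    Continuous (pathHeight L)
  | [], _ => continuous_const
  | [_], _ => continuous_const
  | u :: v :: t, hL => by
    have huv := (List.isChain_cons_cons.1 hL).1
    have hline : Continuous fun x => lineThrough u v (max x u.1) := by
      unfold lineThrough; fun_prop
    refine Continuous.if_le hline (continuous_pathHeight hL.tail) continuous_id
      continuous_const ?_
    rintro x rfl
    rw [max_eq_left huv.le, lineThrough_right huv, pathHeight_cons_of_le hL.tail le_rfl]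

lemma pathWeight_append_cons {α : Type*} [AddCommMonoid α] (ε : (ℝ × ℝ) × (ℝ × ℝ) → α)
    (l : List (ℝ × ℝ)) (v : ℝ × ℝ) (t : List (ℝ × ℝ)) :
    pathWeight ε (l ++ v :: t) = pathWeight ε (l ++ [v]) + pathWeight ε (v :: t) := by
  induction l with
  | nil => simp [pathWeight]
  | cons u l ih =>
    rcases l with _ | ⟨w, l⟩
    · simp [pathWeight, add_comm]
    · have hcons : ∀ t', pathWeight ε (u :: w :: t') = ε (u, w) + pathWeight ε (w :: t') :=
        fun _ => by simp [pathWeight]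
      simp only [List.cons_append] at ih ⊢
      rw [hcons, hcons, ih, add_assoc]

lemma le_or_le_of_ne_on_Ioo {f g : ℝ → ℝ} (hf : Continuous f) (hg : Continuous g) {c d : ℝ}
    (hcd : c < d) (hne : ∀ x ∈ Ioo c d, f x ≠ g x) :
    (∀ x ∈ Icc c d, f x ≤ g x) ∨ (∀ x ∈ Icc c d, g x ≤ f x) := by
  have hIoo : (∀ x ∈ Ioo c d, f x ≤ g x) ∨ (∀ x ∈ Ioo c d, g x ≤ f x) := by
    by_contra! ⟨⟨x, hx, hgf⟩, y, hy, hfg⟩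
    obtain ⟨z, hz, hfgz⟩ := isPreconnected_Ioo.intermediate_value₂ hy hx hf.continuousOn
      hg.continuousOn hfg.le hgf.le
    exact hne z hz hfgz
  rw [← closure_Ioo hcd.ne]
  exact hIoo.imp (fun h => closure_minimal h (isClosed_le hf hg))
    (fun h => closure_minimal h (isClosed_le hg hf))

lemma PlanarNetwork.eq_or_eq_endpoint_of_mem_segment (Γ : PlanarNetwork)
    {e f : (ℝ × ℝ) × (ℝ × ℝ)} (he : e ∈ Γ.E) (hf : f ∈ Γ.E) {z : ℝ × ℝ}
    (hze : z ∈ segment ℝ e.1 e.2) (hzf : z ∈ segment ℝ f.1 f.2) :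
    e = f ∨ (z = e.1 ∨ z = e.2) ∧ (z = f.1 ∨ z = f.2) := by
  refine or_iff_not_imp_left.2 fun hef => ?_
  have hze' : z = e.1 ∨ z = e.2 := by
    rw [← insert_endpoints_openSegment] at hze
    rcases hze with h | h | h
    exacts [Or.inl h, Or.inr h, absurd hzf (Γ.embed e he f hf hef z h)]
  have hzV : z ∈ Γ.V := by
    rcases hze' with rfl | rfl
    exacts [(Γ.ends e he).1, (Γ.ends e he).2.1]
  refine ⟨hze', ?_⟩
  rw [← insert_endpoints_openSegment] at hzf
  rcases hzf with h | h | h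
  exacts [Or.inl h, Or.inr h, absurd h (Γ.embedV f hf z hzV)]

lemma isPathBetween_append_cons_iff {Γ : PlanarNetwork} {p q v : ℝ × ℝ}
    {l t : List (ℝ × ℝ)} :
    IsPathBetween Γ p q (l ++ v :: t) ↔
      IsPathBetween Γ p v (l ++ [v]) ∧ IsPathBetween Γ v q (v :: t) := by
  have hhead : (l ++ v :: t).head? = (l ++ [v]).head? := by simp [List.head?_append]
  have hlast : (l ++ v :: t).getLast? = (v :: t).getLast? :=
    List.getLast?_append_of_ne_nil _ (List.cons_ne_nil _ _)
  constructor
  · rintro ⟨-, hc, hp, hq⟩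
    obtain ⟨hc₁, hc₂⟩ := List.isChain_split.1 hc
    exact ⟨⟨by simp, hc₁, hhead ▸ hp, List.getLast?_concat⟩, ⟨by simp, hc₂, rfl, hlast ▸ hq⟩⟩
  · rintro ⟨⟨-, hc₁, hp, -⟩, ⟨-, hc₂, -, hq⟩⟩
    exact ⟨by simp, List.isChain_split.2 ⟨hc₁, hc₂⟩, hhead ▸ hp, hlast ▸ hq⟩

/-- `IsThroughPath Γ` is `IsPathOver Γ Γ.a Γ.b`. -/
def IsPathOver (Γ : PlanarNetwork) (c d : ℝ) (L : List (ℝ × ℝ)) : Prop :=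
  ∃ p q, IsPathBetween Γ p q L ∧ p.1 = c ∧ q.1 = d

namespace IsPathBetween

variable {Γ : PlanarNetwork} {p q : ℝ × ℝ} {L : List (ℝ × ℝ)}

lemma isChain_fst_lt (h : IsPathBetween Γ p q L) : L.IsChain (·.1 < ·.1) :=
  h.2.1.imp fun {_ _} he => (Γ.ends _ he).2.2

lemma left_mem (h : IsPathBetween Γ p q L) : p ∈ L := List.mem_of_mem_head? h.2.2.1

lemma right_mem (h : IsPathBetween Γ p q L) : q ∈ L := List.mem_of_getLast? h.2.2.2

lemma fst_mem_Icc (h : IsPathBetween Γ p q L) {v : ℝ × ℝ} (hv : v ∈ L) : v.1 ∈ Icc p.1 q.1 := by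
  have hpw := List.isChain_iff_pairwise.1 h.isChain_fst_lt
  obtain ⟨t, rfl⟩ := List.head?_eq_some_iff.1 h.2.2.1
  obtain ⟨s, hs⟩ := List.getLast?_eq_some_iff.1 h.2.2.2
  refine ⟨?_, ?_⟩
  · rcases List.mem_cons.1 hv with rfl | hv
    exacts [le_rfl, (List.rel_of_pairwise_cons hpw hv).le]
  · rw [hs] at hpw hv
    rcases List.mem_append.1 hv with hv | hv
    · exact (List.pairwise_append.1 hpw).2.2 v hv q (by simp) |>.le
    · rw [List.mem_singleton.1 hv]

lemma mem_V (h : IsPathBetween Γ p q L) (hpq : p ≠ q) {v : ℝ × ℝ} (hv : v ∈ L) : v ∈ Γ.V := by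
  obtain ⟨l, t, rfl⟩ := List.append_of_mem hv
  rcases t with _ | ⟨w, t⟩
  · rcases List.eq_nil_or_concat' l with rfl | ⟨l', u, rfl⟩
    · have hp := h.2.2.1
      have hq := h.2.2.2
      simp only [List.nil_append, List.head?_cons, List.getLast?_singleton] at hp hq
      exact absurd (Option.some_injective _ (hp.symm.trans hq)) hpq
    · have huv := List.isChain_iff_forall_rel_of_append_cons_cons.1 h.2.1
        (show (l' ++ [u]) ++ [v] = l' ++ u :: v :: [] by simp)
      exact (Γ.ends _ huv).2.1
  · exact (Γ.ends _ (List.isChain_iff_forall_rel_of_append_cons_cons.1 h.2.1 rfl)).1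

end IsPathBetween

namespace IsPathOver

variable {Γ : PlanarNetwork} {c d : ℝ} {L P Q : List (ℝ × ℝ)}

lemma isChain_fst_lt (h : IsPathOver Γ c d L) : L.IsChain (·.1 < ·.1) :=
  let ⟨_, _, h, _⟩ := h; h.isChain_fst_lt

lemma fst_mem_Icc (h : IsPathOver Γ c d L) {v : ℝ × ℝ} (hv : v ∈ L) : v.1 ∈ Icc c d := by
  obtain ⟨p, q, h, rfl, rfl⟩ := h
  exact h.fst_mem_Icc hv

lemma pathHeight_eq_of_mem (h : IsPathOver Γ c d L) {v : ℝ × ℝ} (hv : v ∈ L) :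
    pathHeight L v.1 = v.2 :=
  pathHeight_of_mem h.isChain_fst_lt hv

lemma eq_cons (h : IsPathOver Γ c d L) : L = (c, pathHeight L c) :: L.tail := by
  obtain ⟨p, q, h', rfl, rfl⟩ := h
  obtain ⟨t, rfl⟩ := List.head?_eq_some_iff.1 h'.2.2.1
  rw [pathHeight_of_mem h'.isChain_fst_lt h'.left_mem]
  rfl

lemma eq_append (h : IsPathOver Γ c d L) : L = L.dropLast ++ [(d, pathHeight L d)] := by
  obtain ⟨p, q, h', rfl, rfl⟩ := h
  obtain ⟨s, hs⟩ := List.getLast?_eq_some_iff.1 h'.2.2.2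
  rw [pathHeight_of_mem h'.isChain_fst_lt h'.right_mem]
  conv_lhs => rw [hs]
  rw [hs, List.dropLast_concat]

lemma exists_mem_pathEdges (h : IsPathOver Γ c d L) (hcd : c < d) {x : ℝ} (hx : x ∈ Icc c d) :
    ∃ e ∈ pathEdges L, x ∈ Icc e.1.1 e.2.1 := by
  obtain ⟨p, q, h, rfl, rfl⟩ := h
  exact exists_mem_pathEdges_of_mem_Icc h.2.2.1 h.2.2.2 hcd x hx

lemma append_cons_iff {l t : List (ℝ × ℝ)} {v : ℝ × ℝ} :
    IsPathOver Γ c d (l ++ v :: t) ↔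
      IsPathOver Γ c v.1 (l ++ [v]) ∧ IsPathOver Γ v.1 d (v :: t) := by
  constructor
  · rintro ⟨p, q, h, hp, hq⟩
    obtain ⟨h₁, h₂⟩ := isPathBetween_append_cons_iff.1 h
    exact ⟨⟨p, v, h₁, hp, rfl⟩, ⟨v, q, h₂, rfl, hq⟩⟩
  · rintro ⟨⟨p, v', h₁, hp, hv'⟩, ⟨v'', q, h₂, hv'', hq⟩⟩
    have hv'' : v'' = v := Option.some_injective _ (h₂.2.2.1.symm.trans rfl)
    have hv' : v' = v := by
      have := h₁.2.2.2
      rw [List.getLast?_concat] at this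
      exact (Option.some_injective _ this).symm
    subst hv' hv''
    exact ⟨p, q, isPathBetween_append_cons_iff.2 ⟨h₁, h₂⟩, hp, hq⟩

lemma one_lt_length (h : IsPathOver Γ c d L) (hcd : c < d) : 1 < L.length := by
  obtain ⟨e, he, -⟩ := h.exists_mem_pathEdges hcd (left_mem_Icc.2 hcd.le)
  obtain ⟨l, t, rfl⟩ := mem_pathEdges_iff.1 he
  simp only [List.length_append, List.length_cons]
  omega

lemma mem_E_of_mem_pathEdges (h : IsPathOver Γ c d L) {e : (ℝ × ℝ) × (ℝ × ℝ)}
    (he : e ∈ pathEdges L) : e ∈ Γ.E :=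
  let ⟨_, _, h, _⟩ := h; rel_of_mem_pathEdges h.2.1 he

lemma continuous_pathHeight (h : IsPathOver Γ c d L) : Continuous (pathHeight L) :=
  _root_.continuous_pathHeight h.isChain_fst_lt

/-- This is where planarity enters: two paths meet only at common vertices or along common
edges. -/
lemma exists_common_of_pathHeight_eq (hP : IsPathOver Γ c d P) (hQ : IsPathOver Γ c d Q)
    (hcd : c < d) {x : ℝ} (hx : x ∈ Icc c d) (heq : pathHeight P x = pathHeight Q x) :
    (∃ w ∈ P, w ∈ Q ∧ w.1 = x) ∨ ∃ e ∈ pathEdges P, e ∈ pathEdges Q ∧ x ∈ Icc e.1.1 e.2.1 := by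
  obtain ⟨e, heP, hxe⟩ := hP.exists_mem_pathEdges hcd hx
  obtain ⟨f, hfQ, hxf⟩ := hQ.exists_mem_pathEdges hcd hx
  have he := hP.mem_E_of_mem_pathEdges heP
  have hf := hQ.mem_E_of_mem_pathEdges hfQ
  have hze : (x, pathHeight P x) ∈ segment ℝ e.1 e.2 :=
    (mem_segment_iff_lineThrough (Γ.ends e he).2.2).2
      ⟨hxe, pathHeight_of_mem_pathEdges hP.isChain_fst_lt heP hxe⟩
  have hzf : (x, pathHeight P x) ∈ segment ℝ f.1 f.2 :=
    (mem_segment_iff_lineThrough (Γ.ends f hf).2.2).2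
      ⟨hxf, heq.trans (pathHeight_of_mem_pathEdges hQ.isChain_fst_lt hfQ hxf)⟩
  rcases Γ.eq_or_eq_endpoint_of_mem_segment he hf hze hzf with rfl | ⟨hzP, hzQ⟩
  · exact Or.inr ⟨e, heP, hfQ, hxe⟩
  · refine Or.inl ⟨(x, pathHeight P x), ?_, ?_, rfl⟩
    · rcases hzP with h | h <;> rw [h]
      exacts [(mem_of_mem_pathEdges heP).1, (mem_of_mem_pathEdges heP).2]
    · rcases hzQ with h | h <;> rw [h]
      exacts [(mem_of_mem_pathEdges hfQ).1, (mem_of_mem_pathEdges hfQ).2]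

lemma le_or_le_of_disjoint_interior (hP : IsPathOver Γ c d P) (hQ : IsPathOver Γ c d Q)
    (hcd : c < d) (hno : ∀ v ∈ P, v ∈ Q → v.1 ∉ Ioo c d) :
    (∀ x ∈ Icc c d, pathHeight P x ≤ pathHeight Q x) ∨
      (∀ x ∈ Icc c d, pathHeight Q x ≤ pathHeight P x) := by
  by_cases hmeet : ∃ x ∈ Ioo c d, pathHeight P x = pathHeight Q x
  · obtain ⟨x, hx, heq⟩ := hmeet
    rcases hP.exists_common_of_pathHeight_eq hQ hcd (Ioo_subset_Icc_self hx) heq with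
      ⟨w, hwP, hwQ, rfl⟩ | ⟨e, heP, heQ, hxe⟩
    · exact absurd hx (hno w hwP hwQ)
    · have hc : e.1.1 = c := by
        by_contra hne
        exact hno e.1 (mem_of_mem_pathEdges heP).1 (mem_of_mem_pathEdges heQ).1
          ⟨lt_of_le_of_ne (hP.fst_mem_Icc (mem_of_mem_pathEdges heP).1).1 (Ne.symm hne),
            hxe.1.trans_lt hx.2⟩
      have hd : e.2.1 = d := by
        by_contra hne
        exact hno e.2 (mem_of_mem_pathEdges heP).2 (mem_of_mem_pathEdges heQ).2
          ⟨hx.1.trans_le hxe.2,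
            lt_of_le_of_ne (hP.fst_mem_Icc (mem_of_mem_pathEdges heP).2).2 hne⟩
      left
      intro y hy
      rw [← hc, ← hd] at hy
      rw [pathHeight_of_mem_pathEdges hP.isChain_fst_lt heP hy,
        pathHeight_of_mem_pathEdges hQ.isChain_fst_lt heQ hy]
  · push Not at hmeet
    exact le_or_le_of_ne_on_Ioo hP.continuous_pathHeight hQ.continuous_pathHeight hcd hmeet

variable {α : Type*} [AddCommMonoid α] (ε : (ℝ × ℝ) × (ℝ × ℝ) → α)

lemma exists_glue {e : ℝ} {L₁ L₂ : List (ℝ × ℝ)} (h₁ : IsPathOver Γ c e L₁)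
    (h₂ : IsPathOver Γ e d L₂) (he : pathHeight L₁ e = pathHeight L₂ e) :
    ∃ L, IsPathOver Γ c d L ∧ pathWeight ε L = pathWeight ε L₁ + pathWeight ε L₂ ∧
      ∀ x, pathHeight L x = if x ≤ e then pathHeight L₁ x else pathHeight L₂ x := by
  set v : ℝ × ℝ := (e, pathHeight L₁ e)
  have hL₁ : L₁ = L₁.dropLast ++ [v] := h₁.eq_append
  have hL₂ : L₂ = v :: L₂.tail := by rw [h₂.eq_cons, ← he]; rfl
  have hL : IsPathOver Γ c d (L₁.dropLast ++ v :: L₂.tail) :=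
    append_cons_iff.2 ⟨hL₁ ▸ h₁, hL₂ ▸ h₂⟩
  refine ⟨_, hL, ?_, fun x => ?_⟩
  · rw [pathWeight_append_cons, ← hL₁, ← hL₂]
  · rw [pathHeight_append_cons hL.isChain_fst_lt, ← hL₁, ← hL₂]

lemma exists_split (hP : IsPathOver Γ c d P) {v : ℝ × ℝ} (hv : v ∈ P) (hcv : c < v.1)
    (hvd : v.1 < d) :
    ∃ P₁ P₂, IsPathOver Γ c v.1 P₁ ∧ IsPathOver Γ v.1 d P₂ ∧
      P₁.length < P.length ∧ P₂.length < P.length ∧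
      pathHeight P₁ v.1 = v.2 ∧ pathHeight P₂ v.1 = v.2 ∧
      pathWeight ε P = pathWeight ε P₁ + pathWeight ε P₂ ∧
      ∀ x, pathHeight P x = if x ≤ v.1 then pathHeight P₁ x else pathHeight P₂ x := by
  obtain ⟨l, t, rfl⟩ := List.append_of_mem hv
  obtain ⟨h₁, h₂⟩ := append_cons_iff.1 hP
  have hl := h₁.one_lt_length hcv
  have ht := h₂.one_lt_length hvd
  simp only [List.length_append, List.length_cons, List.length_nil] at hl ht
  refine ⟨_, _, h₁, h₂, by simp; omega, by simp; omega, h₁.pathHeight_eq_of_mem (by simp),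
    h₂.pathHeight_eq_of_mem (by simp), pathWeight_append_cons ε l v t,
    pathHeight_append_cons hP.isChain_fst_lt⟩

/-- Split both paths at a common vertex strictly inside the strip and recurse on the halves;
without such a vertex the paths do not cross. -/
theorem exists_min_max (hP : IsPathOver Γ c d P) (hQ : IsPathOver Γ c d Q) (hcd : c < d) :
    ∃ R S, IsPathOver Γ c d R ∧ IsPathOver Γ c d S ∧
      pathWeight ε R + pathWeight ε S = pathWeight ε P + pathWeight ε Q ∧
      ∀ x ∈ Icc c d, pathHeight R x = min (pathHeight P x) (pathHeight Q x) ∧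
        pathHeight S x = max (pathHeight P x) (pathHeight Q x) := by
  induction hn : P.length + Q.length using Nat.strong_induction_on generalizing P Q c d with
  | _ n ih =>
  by_cases hcommon : ∃ v ∈ P, v ∈ Q ∧ v.1 ∈ Ioo c d
  · obtain ⟨v, hvP, hvQ, hcv, hvd⟩ := hcommon
    obtain ⟨P₁, P₂, hP₁, hP₂, hP₁l, hP₂l, hP₁v, hP₂v, hPw, hPh⟩ := hP.exists_split ε hvP hcv hvd
    obtain ⟨Q₁, Q₂, hQ₁, hQ₂, hQ₁l, hQ₂l, hQ₁v, hQ₂v, hQw, hQh⟩ := hQ.exists_split ε hvQ hcv hvd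
    obtain ⟨R₁, S₁, hR₁, hS₁, hw₁, hm₁⟩ := ih _ (by omega) hP₁ hQ₁ hcv rfl
    obtain ⟨R₂, S₂, hR₂, hS₂, hw₂, hm₂⟩ := ih _ (by omega) hP₂ hQ₂ hvd rfl
    have hv₁ := hm₁ v.1 (right_mem_Icc.2 hcv.le)
    have hv₂ := hm₂ v.1 (left_mem_Icc.2 hvd.le)
    rw [hP₁v, hQ₁v, min_self, max_self] at hv₁
    rw [hP₂v, hQ₂v, min_self, max_self] at hv₂
    obtain ⟨R, hR, hwR, hhR⟩ := exists_glue ε hR₁ hR₂ (hv₁.1.trans hv₂.1.symm)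
    obtain ⟨S, hS, hwS, hhS⟩ := exists_glue ε hS₁ hS₂ (hv₁.2.trans hv₂.2.symm)
    refine ⟨R, S, hR, hS, ?_, fun x hx => ?_⟩
    · rw [hwR, hwS, hPw, hQw, add_add_add_comm, hw₁, hw₂, add_add_add_comm]
    · rw [hhR, hhS, hPh, hQh]
      split_ifs with hxv
      exacts [hm₁ x ⟨hx.1, hxv⟩, hm₂ x ⟨(not_le.1 hxv).le, hx.2⟩]
  · push Not at hcommon
    rcases hP.le_or_le_of_disjoint_interior hQ hcd hcommon with hle | hle
    · exact ⟨P, Q, hP, hQ, rfl,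
        fun x hx => ⟨(min_eq_left (hle x hx)).symm, (max_eq_right (hle x hx)).symm⟩⟩
    · exact ⟨Q, P, hQ, hP, add_comm _ _,
        fun x hx => ⟨(min_eq_right (hle x hx)).symm, (max_eq_left (hle x hx)).symm⟩⟩

end IsPathOver

section ComparatorSort

variable {α ι β M : Type*} [LinearOrder β] [AddCommMonoid M] {S : Set α} {w : α → M}
  {f : α → ι → β}

lemma exists_insert_sortedLE
    (hcmp : ∀ P ∈ S, ∀ Q ∈ S, ∃ R ∈ S, ∃ R' ∈ S, w R + w R' = w P + w Q ∧
      ∀ i, f R i = min (f P i) (f Q i) ∧ f R' i = max (f P i) (f Q i))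
    (l : List α) (hl : ∀ Q ∈ l, Q ∈ S) (hsort : ∀ i, (l.map (f · i)).SortedLE)
    {P : α} (hP : P ∈ S) :
    ∃ l' : List α, (∀ Q ∈ l', Q ∈ S) ∧ (l'.map w).sum = w P + (l.map w).sum ∧
      ∀ i, (l'.map (f · i)).SortedLE ∧ (l'.map (f · i)).Perm (f P i :: l.map (f · i)) := by
  induction l generalizing P with
  | nil =>
    exact ⟨[P], by simpa using hP, by simp,
      fun i => ⟨by simp [List.sortedLE_iff_pairwise], .refl _⟩⟩
  | cons Q t ih =>
    simp only [List.mem_cons, forall_eq_or_imp] at hl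
    simp only [List.map_cons, List.sortedLE_iff_pairwise, List.pairwise_cons] at hsort
    obtain ⟨R, hR, R', hR', hw, hf⟩ := hcmp P hP Q hl.1
    obtain ⟨l', hl'S, hl'w, hl'f⟩ := ih hl.2 (fun i => (hsort i).2.sortedLE) hR'
    refine ⟨R :: l', by simpa [hR] using hl'S, ?_, fun i => ⟨?_, ?_⟩⟩
    · simp only [List.map_cons, List.sum_cons, hl'w, ← add_assoc, hw]
    · rw [List.map_cons, List.sortedLE_iff_pairwise, List.pairwise_cons]
      refine ⟨fun y hy => ?_, List.sortedLE_iff_pairwise.1 (hl'f i).1⟩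
      rw [(hf i).1]
      rcases List.mem_cons.1 ((hl'f i).2.mem_iff.1 hy) with rfl | hy
      · rw [(hf i).2]
        exact min_le_max
      · exact (min_le_right _ _).trans ((hsort i).1 y hy)
    · rw [List.map_cons, (hf i).1]
      refine ((hl'f i).2.cons _).trans ?_
      rw [(hf i).2, List.map_cons]
      rcases le_total (f P i) (f Q i) with h | h
      · rw [min_eq_left h, max_eq_right h]
      · rw [min_eq_right h, max_eq_left h]
        exact List.Perm.swap _ _ _

/-- Insertion sort in which each comparison may replace the two compared elements by their
pointwise minimum and maximum. -/
theorem exists_sortedLE_perm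
    (hcmp : ∀ P ∈ S, ∀ Q ∈ S, ∃ R ∈ S, ∃ R' ∈ S, w R + w R' = w P + w Q ∧
      ∀ i, f R i = min (f P i) (f Q i) ∧ f R' i = max (f P i) (f Q i))
    (l : List α) (hl : ∀ P ∈ l, P ∈ S) :
    ∃ l' : List α, (∀ P ∈ l', P ∈ S) ∧ (l'.map w).sum = (l.map w).sum ∧
      ∀ i, (l'.map (f · i)).SortedLE ∧ (l'.map (f · i)).Perm (l.map (f · i)) := by
  induction l with
  | nil => exact ⟨[], by simp, rfl, fun i => ⟨by simp [List.sortedLE_iff_pairwise], .nil⟩⟩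
  | cons P t ih =>
    simp only [List.mem_cons, forall_eq_or_imp] at hl
    obtain ⟨t', ht'S, ht'w, ht'f⟩ := ih hl.2
    obtain ⟨l', hl'S, hl'w, hl'f⟩ :=
      exists_insert_sortedLE hcmp t' ht'S (fun i => (ht'f i).1) hl.1
    exact ⟨l', hl'S, by simp [hl'w, ht'w], fun i => ⟨(hl'f i).1,
      (hl'f i).2.trans (((ht'f i).2).cons _)⟩⟩

end ComparatorSort

theorem exists_sortedLE_paths {Γ : PlanarNetwork} {α : Type*} [AddCommMonoid α]
    (ε : (ℝ × ℝ) × (ℝ × ℝ) → α) {c d : ℝ} (hcd : c < d) (l : List (List (ℝ × ℝ)))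
    (hl : ∀ L ∈ l, IsPathOver Γ c d L) :
    ∃ l' : List (List (ℝ × ℝ)), (∀ L ∈ l', IsPathOver Γ c d L) ∧
      (l'.map (pathWeight ε)).sum = (l.map (pathWeight ε)).sum ∧
      ∀ x ∈ Icc c d, (l'.map (pathHeight · x)).SortedLE ∧
        (l'.map (pathHeight · x)).Perm (l.map (pathHeight · x)) := by
  obtain ⟨l', hl'S, hl'w, hl'f⟩ := exists_sortedLE_perm (S := {L | IsPathOver Γ c d L})
    (f := fun L (x : Icc c d) => pathHeight L x)
    (fun P hP Q hQ => by
      obtain ⟨R, S, hR, hS, hw, hRS⟩ := IsPathOver.exists_min_max ε hP hQ hcd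
      exact ⟨R, hR, S, hS, hw, fun x => hRS x x.2⟩) l hl
  exact ⟨l', hl'S, hl'w, fun x hx => hl'f ⟨x, hx⟩⟩

namespace List

variable {β : Type*} [LinearOrder β] {l : List β}

lemma SortedLE.getElem_le_of_countP_lt_le (hl : l.SortedLE) {c : β} {k : ℕ}
    (hc : l.countP (c < ·) ≤ k) {i : ℕ} (hi : i + k < l.length) : l[i] ≤ c := by
  by_contra! h
  have hall : ∀ a ∈ l.drop i, c < a := by
    intro a ha
    obtain ⟨j, hj, rfl⟩ := mem_iff_getElem.1 ha
    rw [getElem_drop]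
    exact h.trans_le (hl.getElem_le_getElem_of_le (by omega))
  have := (drop_sublist i l).countP_le (p := (c < ·))
  rw [countP_eq_length.2 (by simpa using hall), length_drop] at this
  omega

lemma SortedLE.getElem_lt_getElem_of_count_le_two (hl : l.SortedLE) (hc : ∀ a, l.count a ≤ 2)
    {i j : ℕ} (hij : i + 2 ≤ j) (hj : j < l.length) : l[i] < l[j] := by
  have h₁ : l[i] ≤ l[i + 1] := hl.getElem_le_getElem_of_le (Nat.le_succ i)
  have h₂ : l[i + 1] ≤ l[i + 2] := hl.getElem_le_getElem_of_le (Nat.le_succ _)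
  have h₃ : l[i + 2] ≤ l[j] := hl.getElem_le_getElem_of_le hij
  refine lt_of_le_of_ne (h₁.trans (h₂.trans h₃)) fun heq => ?_
  have hsub : [l[i], l[i + 1], l[i + 2]] <+ l := by
    refine Sublist.trans ?_ (drop_sublist i l)
    rw [drop_eq_getElem_cons (i := i) (by omega), drop_eq_getElem_cons (i := i + 1) (by omega),
      drop_eq_getElem_cons (i := i + 2) (by omega)]
    exact .cons_cons _ (.cons_cons _ (.cons_cons _ (nil_sublist _)))
  have := hsub.count_le l[i]
  have e₁ : l[i + 1] = l[i] := le_antisymm (h₂.trans (h₃.trans heq.ge)) h₁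
  have e₂ : l[i + 2] = l[i] := le_antisymm (h₃.trans heq.ge) (h₁.trans h₂)
  simp [e₁, e₂] at this
  exact absurd (this.trans (hc _)) (by norm_num)

lemma countP_lt_le_one_of_nodup (hl : l.Nodup) {c d : β} (hd : ∀ y ∈ l, c < y → y = d) :
    l.countP (c < ·) ≤ 1 :=
  (countP_mono_left fun y hy hcy => by simpa using hd y hy (by simpa using hcy)).trans
    (nodup_iff_count_le_one.1 hl d)

end List

lemma Finset.sum_range_two_mul {M : Type*} [AddCommMonoid M] (f : ℕ → M) (m : ℕ) :
    ∑ r ∈ range (2 * m), f r = ∑ j ∈ range m, f (2 * j) + ∑ j ∈ range m, f (2 * j + 1) := by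
  induction m with
  | zero => simp
  | succ m ih =>
    rw [Nat.mul_succ, sum_range_succ, sum_range_succ, ih, sum_range_succ, sum_range_succ]
    abel
section Interlacing

variable {Γ : PlanarNetwork}

lemma isBoundedPath_iff {k : ℕ} {L : List (ℝ × ℝ)} :
    IsBoundedPath Γ k L ↔
      IsPathOver Γ Γ.a Γ.b L ∧ ∀ x ∈ ({Γ.a, Γ.b} : Set ℝ), pathHeight L x ≤ k := by
  constructor
  · rintro ⟨p, q, h, hp, hq, hpk, hqk⟩
    refine ⟨⟨p, q, h, hp, hq⟩, ?_⟩
    rintro x (rfl | rfl)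
    · rwa [← hp, pathHeight_of_mem h.isChain_fst_lt h.left_mem]
    · rwa [← hq, pathHeight_of_mem h.isChain_fst_lt h.right_mem]
  · rintro ⟨⟨p, q, h, hp, hq⟩, hk⟩
    refine ⟨p, q, h, hp, hq, ?_, ?_⟩
    · rw [← pathHeight_of_mem h.isChain_fst_lt h.left_mem, hp]
      exact hk _ (Or.inl rfl)
    · rw [← pathHeight_of_mem h.isChain_fst_lt h.right_mem, hq]
      exact hk _ (Or.inr rfl)

lemma IsPathOver.exists_nat_eq_pathHeight {n : ℕ} (hΓ : Γ.HasRank n) {L : List (ℝ × ℝ)}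
    (h : IsPathOver Γ Γ.a Γ.b L) {x : ℝ} (hx : x ∈ ({Γ.a, Γ.b} : Set ℝ)) :
    ∃ j : ℕ, pathHeight L x = j := by
  obtain ⟨p, q, h, hp, hq⟩ := h
  have hpq : p ≠ q := fun hpq => Γ.hab.ne (hp.symm.trans (hpq ▸ hq))
  rcases hx with rfl | rfl
  · obtain ⟨j, -, -, hj⟩ := hΓ.1 p (h.mem_V hpq h.left_mem) hp
    exact ⟨j, by rw [← hp, pathHeight_of_mem h.isChain_fst_lt h.left_mem, hj]⟩
  · obtain ⟨j, -, -, hj⟩ := hΓ.2.1 q (h.mem_V hpq h.right_mem) hq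
    exact ⟨j, by rw [← hq, pathHeight_of_mem h.isChain_fst_lt h.right_mem, hj]⟩

lemma pairwiseVertexDisjoint_iff_injective {m : ℕ} {F : Fin m → List (ℝ × ℝ)}
    (hF : ∀ j, IsPathOver Γ Γ.a Γ.b (F j)) :
    PairwiseVertexDisjoint F ↔
      ∀ x ∈ Icc Γ.a Γ.b, Function.Injective fun j => pathHeight (F j) x := by
  constructor
  · intro hd x hx j j' heq
    by_contra hjj'
    rcases (hF j).exists_common_of_pathHeight_eq (hF j') Γ.hab hx heq with
      ⟨w, hw, hw', -⟩ | ⟨e, he, he', -⟩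
    · exact hd j j' hjj' w hw hw'
    · exact hd j j' hjj' e.1 (mem_of_mem_pathEdges he).1 (mem_of_mem_pathEdges he').1
  · intro hinj j j' hjj' v hv hv'
    refine hjj' (hinj v.1 ((hF j).fst_mem_Icc hv) ?_)
    simp only [(hF j).pathHeight_eq_of_mem hv, (hF j').pathHeight_eq_of_mem hv']

lemma PairwiseVertexDisjoint.nodup_pathHeight {m : ℕ} {F : Fin m → List (ℝ × ℝ)}
    (hd : PairwiseVertexDisjoint F) (hF : ∀ j, IsPathOver Γ Γ.a Γ.b (F j)) {x : ℝ}
    (hx : x ∈ Icc Γ.a Γ.b) : (List.ofFn fun j => pathHeight (F j) x).Nodup :=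
  List.nodup_ofFn.2 ((pairwiseVertexDisjoint_iff_injective hF).1 hd x hx)

/-- Sources and sinks sit at integer heights, so for `k = K + 1` every height above `K` at an end
of the strip is `K + 1`, and it occurs at most once. -/
lemma countP_lt_pathHeight_le {n : ℕ} (hΓ : Γ.HasRank n) {p k K : ℕ} (hk : k ≤ K + 1)
    {F : Fin p → List (ℝ × ℝ)} (hF : ∀ j, IsBoundedPath Γ k (F j))
    (hd : PairwiseVertexDisjoint F) {x : ℝ} (hx : x ∈ ({Γ.a, Γ.b} : Set ℝ)) :
    (List.ofFn fun j => pathHeight (F j) x).countP ((K : ℝ) < ·) ≤ k - K := by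
  have hle : ∀ j, pathHeight (F j) x ≤ k := fun j => (isBoundedPath_iff.1 (hF j)).2 x hx
  rcases Nat.lt_or_ge K k with hKk | hkK
  · have hF' := fun j => (isBoundedPath_iff.1 (hF j)).1
    have hx' : x ∈ Icc Γ.a Γ.b := by
      rcases hx with rfl | rfl
      exacts [left_mem_Icc.2 Γ.hab.le, right_mem_Icc.2 Γ.hab.le]
    refine (List.countP_lt_le_one_of_nodup (d := k) (hd.nodup_pathHeight hF' hx') ?_).trans
      (by omega)
    simp only [List.mem_ofFn]
    rintro _ ⟨j, rfl⟩ hKj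
    obtain ⟨i, hi⟩ := (hF' j).exists_nat_eq_pathHeight hΓ hx
    have := hle j
    rw [hi] at hKj this ⊢
    norm_cast at hKj this ⊢
    omega
  · refine (List.countP_eq_zero.2 ?_).trans_le (Nat.zero_le _)
    simp only [List.mem_ofFn]
    rintro _ ⟨j, rfl⟩
    simpa using (hle j).trans (Nat.cast_le.2 hkK)

lemma isBoundedPath_getD_of_countP_le {G : List (List (ℝ × ℝ))}
    (hG : ∀ L ∈ G, IsPathOver Γ Γ.a Γ.b L)
    (hsort : ∀ x ∈ ({Γ.a, Γ.b} : Set ℝ), (G.map (pathHeight · x)).SortedLE) {K c r : ℕ}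
    (hcnt : ∀ x ∈ ({Γ.a, Γ.b} : Set ℝ), (G.map (pathHeight · x)).countP ((K : ℝ) < ·) ≤ c)
    (hr : r + c < G.length) : IsBoundedPath Γ K (G.getD r []) := by
  have hr' : r < G.length := by omega
  rw [List.getD_eq_getElem _ _ hr']
  refine isBoundedPath_iff.2 ⟨hG _ (List.getElem_mem hr'), fun x hx => ?_⟩
  simpa using (hsort x hx).getElem_le_of_countP_lt_le (hcnt x hx) (i := r)
    (by rwa [List.length_map])

/-- At every abscissa each height occurs at most twice, once in each multipath; this gives the
strict inequality between sorted paths two apart. -/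
theorem exists_sorted_union {n : ℕ} (hΓ : Γ.HasRank n) (ε : (ℝ × ℝ) × (ℝ × ℝ) → ℝ)
    {K kA kB pA pB : ℕ} (hK : kA = K ∧ kB = K + 1 ∨ kA = K + 1 ∧ kB = K) {a b : ℝ}
    (ha : a ∈ boundedWeights Γ ε pA kA) (hb : b ∈ boundedWeights Γ ε pB kB) :
    ∃ g : ℕ → List (ℝ × ℝ), ∑ r ∈ Finset.range (pA + pB), pathWeight ε (g r) = a + b ∧
      (∀ r < pA + pB, IsBoundedPath Γ (K + 1) (g r)) ∧
      (∀ r, r + 1 < pA + pB → IsBoundedPath Γ K (g r)) ∧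
      ∀ x ∈ Icc Γ.a Γ.b, ∀ r r', r + 2 ≤ r' → r' < pA + pB →
        pathHeight (g r) x < pathHeight (g r') x := by
  obtain ⟨FA, hFA, hdA, rfl⟩ := ha
  obtain ⟨FB, hFB, hdB, rfl⟩ := hb
  have hA := fun j => (isBoundedPath_iff.1 (hFA j)).1
  have hB := fun j => (isBoundedPath_iff.1 (hFB j)).1
  obtain ⟨G, hG, hGw, hGx⟩ := exists_sortedLE_paths (Γ := Γ) ε Γ.hab (List.ofFn FA ++ List.ofFn FB)
    (by simp only [List.mem_append, List.mem_ofFn]; rintro _ (⟨j, rfl⟩ | ⟨j, rfl⟩) <;> simp [*])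
  simp only [List.map_append, List.map_ofFn] at hGw hGx
  have hlen : G.length = pA + pB := by
    simpa using (hGx Γ.a (left_mem_Icc.2 Γ.hab.le)).2.length_eq
  have hends : ({Γ.a, Γ.b} : Set ℝ) ⊆ Icc Γ.a Γ.b := by
    rintro x (rfl | rfl)
    exacts [left_mem_Icc.2 Γ.hab.le, right_mem_Icc.2 Γ.hab.le]
  have hcnt : ∀ K', kA ≤ K' + 1 → kB ≤ K' + 1 → ∀ x ∈ ({Γ.a, Γ.b} : Set ℝ),
      (G.map (pathHeight · x)).countP ((K' : ℝ) < ·) ≤ (kA - K') + (kB - K') := by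
    intro K' hkA hkB x hx
    rw [(hGx x (hends hx)).2.countP_eq, List.countP_append]
    exact add_le_add (countP_lt_pathHeight_le hΓ hkA hFA hdA hx)
      (countP_lt_pathHeight_le hΓ hkB hFB hdB hx)
  have hsort := fun x hx => (hGx x (hends hx)).1
  refine ⟨fun r => G.getD r [], ?_, fun r hr => ?_, fun r hr => ?_, fun x hx r r' hrr' hr' => ?_⟩
  · rw [← hlen, ← Fin.sum_univ_eq_sum_range]
    simp only [List.getD_eq_getElem _ _ (Fin.is_lt _), Fin.sum_univ_fun_getElem, hGw,
      List.sum_append, List.sum_ofFn, Function.comp_apply]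
  · exact isBoundedPath_getD_of_countP_le hG hsort (hcnt (K + 1) (by omega) (by omega))
      (by omega)
  · exact isBoundedPath_getD_of_countP_le hG hsort (hcnt K (by omega) (by omega)) (by omega)
  · have hcount : ∀ y, (G.map (pathHeight · x)).count y ≤ 2 := fun y => by
      rw [(hGx x hx).2.count_eq, List.count_append]
      exact add_le_add (List.nodup_iff_count_le_one.1 (hdA.nodup_pathHeight hA hx) y)
        (List.nodup_iff_count_le_one.1 (hdB.nodup_pathHeight hB hx) y)
    simp only [List.getD_eq_getElem _ _ (hlen ▸ hr' : r' < G.length),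
      List.getD_eq_getElem _ _ (by omega : r < G.length)]
    have h := (hGx x hx).1.getElem_lt_getElem_of_count_le_two hcount hrr'
      (by rw [List.length_map]; omega)
    rwa [List.getElem_map, List.getElem_map] at h

lemma sum_two_mul_add_mem_boundedWeights (ε : (ℝ × ℝ) × (ℝ × ℝ) → ℝ) {N m off k : ℕ}
    {g : ℕ → List (ℝ × ℝ)} (hm : 2 * m + off ≤ N + 1)
    (hg : ∀ j < m, IsBoundedPath Γ k (g (2 * j + off)))
    (hlt : ∀ x ∈ Icc Γ.a Γ.b, ∀ r r', r + 2 ≤ r' → r' < N →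
      pathHeight (g r) x < pathHeight (g r') x) :
    ∑ j ∈ Finset.range m, pathWeight ε (g (2 * j + off)) ∈ boundedWeights Γ ε m k := by
  refine ⟨fun j => g (2 * j + off), fun j => hg j j.2, ?_,
    (Fin.sum_univ_eq_sum_range (fun j => pathWeight ε (g (2 * j + off))) m).symm⟩
  refine (pairwiseVertexDisjoint_iff_injective fun j => (isBoundedPath_iff.1 (hg j j.2)).1).2
    fun x hx => StrictMono.injective fun j j' hjj' => hlt x hx _ _ ?_ ?_
  · have : (j : ℕ) < j' := hjj'
    omega
  · omega

open Pointwise in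
theorem boundedWeights_succ_add_subset {n : ℕ} (hΓ : Γ.HasRank n)
    (ε : (ℝ × ℝ) × (ℝ × ℝ) → ℝ) (m K : ℕ) :
    boundedWeights Γ ε (m + 1) K + boundedWeights Γ ε m (K + 1) ⊆
      boundedWeights Γ ε (m + 1) (K + 1) + boundedWeights Γ ε m K := by
  rintro _ ⟨a, ha, b, hb, rfl⟩
  obtain ⟨g, hsum, hbig, hsmall, hlt⟩ := exists_sorted_union hΓ ε (Or.inl ⟨rfl, rfl⟩) ha hb
  refine ⟨_, sum_two_mul_add_mem_boundedWeights ε (off := 0) (by omega)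
      (fun j _ => hbig _ (by omega)) hlt,
    _, sum_two_mul_add_mem_boundedWeights ε (off := 1) (by omega)
      (fun j _ => hsmall _ (by omega)) hlt, ?_⟩
  dsimp only
  rw [← hsum, show m + 1 + m = 2 * m + 1 by ring,
    Finset.sum_range_succ (fun r => pathWeight ε (g r)), Finset.sum_range_two_mul,
    Finset.sum_range_succ (fun j => pathWeight ε (g (2 * j + 0)))]
  simp only [add_zero]
  abel

open Pointwise in
theorem boundedWeights_add_two_add_subset {n : ℕ} (hΓ : Γ.HasRank n)
    (ε : (ℝ × ℝ) × (ℝ × ℝ) → ℝ) (m K : ℕ) :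
    boundedWeights Γ ε (m + 2) (K + 1) + boundedWeights Γ ε m K ⊆
      boundedWeights Γ ε (m + 1) K + boundedWeights Γ ε (m + 1) (K + 1) := by
  rintro _ ⟨a, ha, b, hb, rfl⟩
  obtain ⟨g, hsum, hbig, hsmall, hlt⟩ := exists_sorted_union hΓ ε (Or.inr ⟨rfl, rfl⟩) ha hb
  refine ⟨_, sum_two_mul_add_mem_boundedWeights ε (off := 0) (by omega)
      (fun j _ => hsmall _ (by omega)) hlt,
    _, sum_two_mul_add_mem_boundedWeights ε (off := 1) (by omega)
      (fun j _ => hbig _ (by omega)) hlt, ?_⟩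
  dsimp only
  rw [← hsum, show m + 2 + m = 2 * (m + 1) by ring, Finset.sum_range_two_mul]
  simp only [add_zero]

end Interlacing

/-- Interlacing of tropical eigenvalues: for a rank-`n`
weighted planar network `Γ`, with `t i k = l_i Γ^{(k)}(ε)` (assumed finite,
i.e. greatest elements of the sets of multipath weights), the differences
`λ_i^{(k)} = t i k − t (i-1) k` satisfy
`λ_i^{(k+1)} ≥ λ_i^{(k)} ≥ λ_{i+1}^{(k+1)}` for all `0 < i ≤ k < n`. -/
theorem tropical_eigenvalues_interlace (n : ℕ) (Γ : PlanarNetwork)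
    (hΓ : Γ.HasRank n) (ε : (ℝ × ℝ) × (ℝ × ℝ) → ℝ) (t : ℕ → ℕ → ℝ)
    (ht : ∀ k, k ≤ n → ∀ i, i ≤ k → IsGreatest (boundedWeights Γ ε i k) (t i k))
    (lam : ℕ → ℕ → ℝ) (hlam : ∀ i k, lam i k = t i k - t (i - 1) k) :
    ∀ i k, 0 < i → i ≤ k → k < n →
      lam i (k + 1) ≥ lam i k ∧ lam i k ≥ lam (i + 1) (k + 1) := by
  intro i k hi hik hkn
  obtain ⟨m, rfl⟩ : ∃ m, i = m + 1 := ⟨i - 1, by omega⟩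
  have ht' : ∀ i k, i ≤ k → k ≤ n → IsGreatest (boundedWeights Γ ε i k) (t i k) :=
    fun i k hi hk => ht k hk i hi
  have h₁ : t (m + 1) k + t m (k + 1) ≤ t (m + 1) (k + 1) + t m k :=
    add_mem_upperBounds_add (ht' _ _ (by omega) hkn).2 (ht' _ _ (by omega) hkn.le).2 <|
      boundedWeights_succ_add_subset hΓ ε m k <|
        Set.add_mem_add (ht' _ _ hik hkn.le).1 (ht' _ _ (by omega) hkn).1
  have h₂ : t (m + 2) (k + 1) + t m k ≤ t (m + 1) k + t (m + 1) (k + 1) :=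
    add_mem_upperBounds_add (ht' _ _ hik hkn.le).2 (ht' _ _ (by omega) hkn).2 <|
      boundedWeights_add_two_add_subset hΓ ε m k <|
        Set.add_mem_add (ht' _ _ (by omega) hkn).1 (ht' _ _ (by omega) hkn.le).1
  simp only [hlam, Nat.add_sub_cancel]
  constructor <;> linarith
end

section
/- Let Θ be a finite directed graph with all in-degrees and out-degrees at most 2 and no (1,1)-vertices, whose canonical path decomposition has components partitioned into sets Q_{LR} (paths from a source-edge to a sink-edge), Q_{L0} (paths with a source-edge but no sink-edge), Q_{0R} (paths with a sink-edge but no source-edge), and the remaining components having an even number of source-edges and sink-edges each. Suppose the total number of source-edges of Θ is 2k−1 and the total number of sink-edges is 2i−1. Then there exists an alternating 2-coloring of the edges of Θ in red and green such that exactly k source-edges and exactly i sink-edges are red. -/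
def inDeg {V E : Type*} [Fintype E] [DecidableEq V] (vt : E → V) (v : V) : ℕ :=
  (Finset.univ.filter fun e => vt e = v).card

def outDeg {V E : Type*} [Fintype E] [DecidableEq V] (vs : E → V) (v : V) : ℕ :=
  (Finset.univ.filter fun e => vs e = v).card

/-- A valid (alternating) `2`-coloring (`true` = red, `false` = green). -/
def ValidColoring {V E : Type*} (vs vt : E → V) (c : E → Bool) : Prop :=
  (∀ e f : E, e ≠ f → vt e = vt f → c e ≠ c f) ∧
  (∀ e f : E, e ≠ f → vs e = vs f → c e ≠ c f)

/-!
Let `σ` pair each edge with the other edge at its source and `τ` with the other edge at its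
target (an edge without such a partner is fixed). Alternation says exactly that `σ` and `τ`
swap colors, and the classes generated by `σ` and `τ` are the paths and cycles of the canonical
path decomposition. Colorings alternating along every class exist: insert the links one at a
time, flipping the colors of one path whenever two paths are joined. On a path the colors of
its free ends are then forced by parity.

Flipping a component negates its contribution `(x, y)` to (red − green) among the source-edges
and among the sink-edges. Matched pairs cancel and a component has at most two free ends, so
`(x, y)` lies in the hexagon `|x|, |y|, |x − y| ≤ 1`. For two points `u, v` of the hexagon,
`u + v` or `u − v` lies in it again, so suitable flips keep the total in the hexagon. Both totals
are odd (`2k − 1` source-edges, `2i − 1` sink-edges), hence the total is `±(1, 1)`, and flipping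
everything if needed makes it `(1, 1)`: `k` red source-edges and `i` red sink-edges.
-/

open Finset Function

namespace AlternatingColoring

variable {E : Type*}

def spin (b : Bool) : ℤ := if b then 1 else -1

lemma spin_xor (a b : Bool) : spin (xor a b) = if b then -spin a else spin a := by
  cases a <;> cases b <;> rfl

lemma spin_add_spin_of_ne {a b : Bool} (h : a ≠ b) : spin a + spin b = 0 := by
  cases a <;> cases b <;> simp_all [spin]

lemma abs_sum_spin_le_one (B : Finset Bool) : |∑ b ∈ B, spin b| ≤ 1 := by
  revert B; decide

lemma two_mul_card_filter_eq (X : Finset E) (c : E → Bool) :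
    2 * (#{e ∈ X | c e = true} : ℤ) = #X + ∑ e ∈ X, spin (c e) := by
  have h : ∀ e ∈ X, spin (c e) = 2 * (if c e = true then 1 else 0) - 1 := by
    intro e _; cases c e <;> rfl
  rw [sum_congr rfl h, sum_sub_distrib, ← mul_sum, sum_boole]
  simp

lemma odd_sum_spin {X : Finset E} (hX : Odd #X) (c : E → Bool) : Odd (∑ e ∈ X, spin (c e)) := by
  have := two_mul_card_filter_eq X c
  obtain ⟨m, hm⟩ := hX
  exact ⟨#{e ∈ X | c e = true} - m - 1, by omega⟩

def hexagon : Set (ℤ × ℤ) := {u | |u.1| ≤ 1 ∧ |u.2| ≤ 1 ∧ |u.1 - u.2| ≤ 1}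

lemma add_mem_hexagon_or_sub_mem {u v : ℤ × ℤ} (hu : u ∈ hexagon) (hv : v ∈ hexagon) :
    u + v ∈ hexagon ∨ u - v ∈ hexagon := by
  simp only [hexagon, Set.mem_ofPred_eq, Prod.fst_add, Prod.snd_add, Prod.fst_sub, Prod.snd_sub,
    abs_le] at *
  omega

lemma exists_sum_ite_neg_mem_hexagon {ι : Type*} (R : Finset ι) {v : ι → ℤ × ℤ}
    (hv : ∀ r ∈ R, v r ∈ hexagon) :
    ∃ φ : ι → Bool, ∑ r ∈ R, (if φ r then -v r else v r) ∈ hexagon := by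
  classical
  induction R using Finset.induction_on with
  | empty => exact ⟨fun _ => false, by simp [hexagon]⟩
  | insert r R hr ih =>
    obtain ⟨φ, hφ⟩ := ih fun r' hr' => hv r' (mem_insert_of_mem hr')
    have hsum : ∀ b, ∑ r' ∈ insert r R, (if update φ r b r' then -v r' else v r') =
        (if b then -v r else v r) + ∑ r' ∈ R, (if φ r' then -v r' else v r') := by
      intro b
      rw [sum_insert hr, update_self]
      congr 1
      refine sum_congr rfl fun r' hr' => ?_
      rw [update_of_ne (ne_of_mem_of_not_mem hr' hr)]
    rcases add_mem_hexagon_or_sub_mem hφ (hv r (mem_insert_self r R)) with h | h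
    · exact ⟨update φ r false, by rw [hsum]; simpa [add_comm] using h⟩
    · exact ⟨update φ r true, by rw [hsum]; simpa [sub_eq_neg_add] using h⟩

lemma exists_sum_ite_neg_eq_one {ι : Type*} (R : Finset ι) {v : ι → ℤ × ℤ}
    (hv : ∀ r ∈ R, v r ∈ hexagon) (h₁ : Odd (∑ r ∈ R, v r).1) (h₂ : Odd (∑ r ∈ R, v r).2) :
    ∃ φ : ι → Bool, ∑ r ∈ R, (if φ r then -v r else v r) = (1, 1) := by
  classical
  obtain ⟨φ, hφ⟩ := exists_sum_ite_neg_mem_hexagon R hv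
  have hpar : ∑ r ∈ R, (if φ r then -v r else v r) =
      ∑ r ∈ R, v r - 2 • ∑ r ∈ R with φ r, v r := by
    rw [sum_ite, ← sum_filter_add_sum_filter_not R (fun r => φ r = true) v, sum_neg_distrib]
    abel
  have hneg : ∑ r ∈ R, (if !φ r then -v r else v r) = -∑ r ∈ R, (if φ r then -v r else v r) := by
    rw [← sum_neg_distrib]
    exact sum_congr rfl fun r _ => by cases φ r <;> simp
  obtain ⟨a₁, ha₁⟩ := h₁
  obtain ⟨a₂, ha₂⟩ := h₂
  have h₁ := congrArg Prod.fst hpar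
  have h₂ := congrArg Prod.snd hpar
  simp only [hexagon, Set.mem_ofPred_eq, abs_le] at hφ
  simp only [Prod.fst_sub, Prod.snd_sub, two_nsmul, Prod.fst_add, Prod.snd_add] at h₁ h₂
  -- the points of the hexagon with odd coordinates are `±(1, 1)`
  rcases (show (∑ r ∈ R, (if φ r then -v r else v r)) = (1, 1) ∨
      (∑ r ∈ R, (if φ r then -v r else v r)) = (-1, -1) by
    simp only [Prod.ext_iff]; omega) with h | h
  · exact ⟨φ, h⟩
  · exact ⟨fun r => !φ r, by rw [hneg, h]; rfl⟩

lemma exists_involutive_partner {E V : Type*} [Fintype E] [DecidableEq V] (f : E → V)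
    (hf : ∀ v, #{e | f e = v} ≤ 2) :
    ∃ σ : E → E, Involutive σ ∧ (∀ e, f (σ e) = f e) ∧
      ∀ e e', e ≠ e' → f e = f e' → σ e = e' := by
  classical
  have unique : ∀ e e₁ e₂, e ≠ e₁ → e ≠ e₂ → f e = f e₁ → f e = f e₂ → e₁ = e₂ := by
    intro e e₁ e₂ h₁ h₂ hf₁ hf₂
    by_contra h₁₂
    refine (hf (f e)).not_gt (two_lt_card.2 ⟨e, ?_, e₁, ?_, e₂, ?_, h₁, h₂, h₁₂⟩) <;>
      simp [← hf₁, ← hf₂]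
  let σ e := if h : ∃ e', e ≠ e' ∧ f e = f e' then h.choose else e
  have hσ : ∀ e e', e ≠ e' → f e = f e' → σ e = e' := by
    intro e e' hne hfe
    have h : ∃ e', e ≠ e' ∧ f e = f e' := ⟨e', hne, hfe⟩
    simp only [σ, dif_pos h]
    exact unique e _ _ h.choose_spec.1 hne h.choose_spec.2 hfe
  have hfσ : ∀ e, f (σ e) = f e := by
    intro e
    by_cases h : ∃ e', e ≠ e' ∧ f e = f e'
    · obtain ⟨e', hne, hfe⟩ := h
      rw [hσ e e' hne hfe, hfe]
    · simp only [σ, dif_neg h]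
  refine ⟨σ, fun e => ?_, hfσ, hσ⟩
  by_cases he : σ e = e
  · rw [he, he]
  · exact hσ _ _ he (hfσ e)

/-- `π s e` is the partner of the edge `e` at its end `s` (`e` itself if that end is free), and
`comp` is constant on the classes generated by `π false` and `π true`. A free end `(e, s)` is
labelled `xor (c e) s`; distinct free ends with the same `comp` carry distinct labels, so a
component has at most two free ends, colored as alternation along a path forces. -/
structure IsPathColoring (π : Bool → E → E) (c : E → Bool) (comp : E → E) : Prop where
  alternates : ∀ s e, π s e ≠ e → c (π s e) ≠ c e
  comp_apply : ∀ s e, comp (π s e) = comp e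
  xor_ne : ∀ ⦃e f : E⦄ ⦃s t : Bool⦄, (e, s) ≠ (f, t) → comp e = comp f → π s e = e →
    π t f = f → xor (c e) s ≠ xor (c f) t

variable {π : Bool → E → E} {c : E → Bool} {comp : E → E}

lemma IsPathColoring.xor_comp (h : IsPathColoring π c comp) (φ : E → Bool) :
    IsPathColoring π (fun e => xor (c e) (φ (comp e))) comp where
  alternates s e he := by simpa [h.comp_apply] using h.alternates s e he
  comp_apply := h.comp_apply
  xor_ne e f s t hne hc he hf := by
    show xor (xor (c e) (φ (comp e))) s ≠ xor (xor (c f) (φ (comp f))) t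
    rw [hc, Bool.xor_right_comm (c e), Bool.xor_right_comm (c f), Ne, Bool.xor_left_inj]
    exact h.xor_ne hne hc he hf

lemma isPathColoring_id (hπ : ∀ s e, π s e = e) (c : E → Bool) : IsPathColoring π c id where
  alternates s e he := absurd (hπ s e) he
  comp_apply := hπ
  xor_ne e f s t hne hc _ _ := by
    obtain rfl : e = f := hc
    cases s <;> cases t <;> simp_all

variable [DecidableEq E]

def cutAt (π : Bool → E → E) (s : Bool) (x : E) (t : Bool) (e : E) : E :=
  if t = s ∧ (e = x ∨ e = π s x) then e else π t e

lemma involutive_cutAt (hπ : ∀ t, Involutive (π t)) (s : Bool) (x : E) (t : Bool) :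
    Involutive (cutAt π s x t) := by
  intro e
  by_cases h : t = s ∧ (e = x ∨ e = π s x)
  · have h₁ : cutAt π s x t e = e := if_pos h
    rw [h₁, h₁]
  · have h' : ¬(t = s ∧ (π t e = x ∨ π t e = π s x)) := by
      rintro ⟨rfl, hx | hx⟩
      · exact h ⟨rfl, Or.inr (by rw [← hx, hπ])⟩
      · exact h ⟨rfl, Or.inl ((hπ t).injective hx)⟩
    have h₁ : cutAt π s x t e = π t e := if_neg h
    rw [h₁, cutAt, if_neg h', hπ]

lemma card_cutAt_lt [Fintype E] {s : Bool} {x : E} (hx : π s x ≠ x) :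
    #{p : E × Bool | cutAt π s x p.2 p.1 ≠ p.1} < #{p : E × Bool | π p.2 p.1 ≠ p.1} := by
  refine card_lt_card ((ssubset_iff_of_subset fun p => ?_).2 ⟨(x, s), by simpa using hx, ?_⟩)
  · intro hp
    simp only [Finset.mem_filter, Finset.mem_univ, true_and] at hp ⊢
    unfold cutAt at hp
    split_ifs at hp <;> simp_all
  · simp [cutAt]

lemma IsPathColoring.link {s : Bool} {x : E} (hπ : Involutive (π s)) (hx : π s x ≠ x)
    (h : IsPathColoring (cutAt π s x) c comp) (hxy : c x ≠ c (π s x)) :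
    IsPathColoring π c (fun e => if comp e = comp (π s x) then comp x else comp e) where
  alternates t e hne := by
    by_cases hte : t = s ∧ (e = x ∨ e = π s x)
    · obtain ⟨rfl, rfl | rfl⟩ := hte
      · exact hxy.symm
      · rw [hπ]; exact hxy
    · have := h.alternates t e
      rw [cutAt, if_neg hte] at this
      exact this hne
  comp_apply t e := by
    by_cases hte : t = s ∧ (e = x ∨ e = π s x)
    · obtain ⟨rfl, rfl | rfl⟩ := hte <;> simp [hπ _]
    · have := h.comp_apply t e
      rw [cutAt, if_neg hte] at this
      rw [this]
  xor_ne e f t u hne hc he hf := by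
    have free : ∀ {e t}, π t e = e → cutAt π s x t e = e := fun he => by
      unfold cutAt; split_ifs <;> simp [he]
    have hx' : cutAt π s x s x = x := if_pos ⟨rfl, Or.inl rfl⟩
    have hy' : cutAt π s x s (π s x) = π s x := if_pos ⟨rfl, Or.inr rfl⟩
    have side_x : ∀ {e t}, π t e = e → comp e = comp x → xor (c e) t = !xor (c x) s :=
      fun {e t} he hc => Bool.eq_not_of_ne <| h.xor_ne
        (by rintro ⟨⟩; exact hx he) hc (free he) hx'
    have side_y : ∀ {e t}, π t e = e → comp e = comp (π s x) → xor (c e) t = xor (c x) s := by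
      intro e t he hc
      have := Bool.eq_not_of_ne <| h.xor_ne
        (by rintro ⟨⟩; exact hx ((hπ x).symm.trans he).symm) hc (free he) hy'
      rw [this, Bool.eq_not_of_ne hxy.symm]
      cases c x <;> cases s <;> rfl
    by_cases he' : comp e = comp (π s x) <;> by_cases hf' : comp f = comp (π s x) <;>
      simp only [he', hf', if_true, if_false] at hc
    · exact h.xor_ne hne (he'.trans hf'.symm) (free he) (free hf)
    · rw [side_y he he', side_x hf hc.symm]; exact Bool.self_ne_not _
    · rw [side_x he hc, side_y hf hf']; exact Bool.not_ne_self _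
    · exact h.xor_ne hne hc (free he) (free hf)

lemma IsPathColoring.exists_of_cutAt {s : Bool} {x : E} (hπ : Involutive (π s)) (hx : π s x ≠ x)
    (h : IsPathColoring (cutAt π s x) c comp) : ∃ c' comp', IsPathColoring π c' comp' := by
  by_cases hxy : c x = c (π s x)
  · -- the free ends `(x, s)` and `(π s x, s)` have equal labels, so lie in different components
    have hcomp : comp x ≠ comp (π s x) := fun hc =>
      h.xor_ne (by simpa using hx.symm) hc (if_pos ⟨rfl, Or.inl rfl⟩) (if_pos ⟨rfl, Or.inr rfl⟩)
        (by rw [hxy])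
    exact ⟨_, _, (h.xor_comp fun r => decide (r = comp (π s x))).link hπ hx (by simp [hcomp, hxy])⟩
  · exact ⟨_, _, h.link hπ hx hxy⟩

theorem exists_isPathColoring [Fintype E] (π : Bool → E → E) (hπ : ∀ s, Involutive (π s)) :
    ∃ c comp, IsPathColoring π c comp := by
  by_cases hfree : ∀ s e, π s e = e
  · exact ⟨fun _ => true, id, isPathColoring_id hfree _⟩
  simp only [not_forall] at hfree
  obtain ⟨s, x, hx⟩ := hfree
  obtain ⟨c, comp, h⟩ := exists_isPathColoring (cutAt π s x) (involutive_cutAt hπ s x)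
  exact h.exists_of_cutAt (hπ s) hx
termination_by #{p : E × Bool | π p.2 p.1 ≠ p.1}
decreasing_by exact card_cutAt_lt hx

def fiberSum (c : E → Bool) (comp : E → E) (Q : Finset (E × Bool)) (r : E) : ℤ :=
  ∑ p ∈ Q with comp p.1 = r, spin (xor (c p.1) p.2)

lemma IsPathColoring.abs_sum_le_one (h : IsPathColoring π c comp) {r : E}
    {P : Finset (E × Bool)} (hP : ∀ p ∈ P, π p.2 p.1 = p.1 ∧ comp p.1 = r) :
    |∑ p ∈ P, spin (xor (c p.1) p.2)| ≤ 1 := by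
  have hinj : Set.InjOn (fun p : E × Bool => xor (c p.1) p.2) P := fun p hp q hq hpq => by
    by_contra hne
    exact h.xor_ne hne ((hP p hp).2.trans (hP q hq).2.symm) (hP p hp).1 (hP q hq).1 hpq
  rw [← sum_image hinj]
  exact abs_sum_spin_le_one _

lemma IsPathColoring.abs_fiberSum_le_one (h : IsPathColoring π c comp)
    (hπ : ∀ s, Involutive (π s)) {Q : Finset (E × Bool)} (hQ : ∀ p ∈ Q, (π p.2 p.1, p.2) ∈ Q)
    (r : E) : |fiberSum c comp Q r| ≤ 1 := by
  rw [fiberSum, ← sum_filter_add_sum_filter_not _ fun p => π p.2 p.1 = p.1]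
  have hmatched : ∑ p ∈ {p ∈ Q | comp p.1 = r} with ¬π p.2 p.1 = p.1,
      spin (xor (c p.1) p.2) = 0 := by
    refine sum_involution (fun p _ => (π p.2 p.1, p.2)) ?_ ?_ ?_ ?_
    · rintro ⟨e, s⟩ hp
      simp only [mem_filter] at hp
      refine spin_add_spin_of_ne ?_
      rw [Ne, Bool.xor_left_inj]
      exact (h.alternates s e hp.2).symm
    · rintro ⟨e, s⟩ hp _ heq
      simp only [mem_filter] at hp
      exact hp.2 (congrArg Prod.fst heq)
    · rintro ⟨e, s⟩ hp
      simp only [mem_filter] at hp ⊢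
      exact ⟨⟨hQ _ hp.1.1, (h.comp_apply s e).trans hp.1.2⟩, by rw [hπ s e]; exact Ne.symm hp.2⟩
    · rintro ⟨e, s⟩ _
      simp [hπ s e]
  rw [hmatched, add_zero]
  exact h.abs_sum_le_one fun p hp => by
    simp only [mem_filter] at hp
    exact ⟨hp.2, hp.1.2⟩

lemma fiberSum_xor_comp (φ : E → Bool) (Q : Finset (E × Bool)) (r : E) :
    fiberSum (fun e => xor (c e) (φ (comp e))) comp Q r =
      if φ r then -fiberSum c comp Q r else fiberSum c comp Q r := by
  have h : ∀ p ∈ {p ∈ Q | comp p.1 = r}, spin (xor (xor (c p.1) (φ (comp p.1))) p.2) =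
      if φ r then -spin (xor (c p.1) p.2) else spin (xor (c p.1) p.2) := fun p hp => by
    rw [(mem_filter.1 hp).2, Bool.xor_right_comm, spin_xor]
  rw [fiberSum, sum_congr rfl h]
  split_ifs <;> simp [fiberSum, sum_neg_distrib]

lemma fiberSum_union {Q Q' : Finset (E × Bool)} (h : Disjoint Q Q') (r : E) :
    fiberSum c comp (Q ∪ Q') r = fiberSum c comp Q r + fiberSum c comp Q' r := by
  rw [fiberSum, filter_union, sum_union (disjoint_filter_filter h)]
  rfl

lemma sum_fiberSum_product_singleton [Fintype E] (c : E → Bool) (comp : E → E) (X : Finset E)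
    (s : Bool) :
    ∑ r, fiberSum c comp (X ×ˢ {s}) r =
      if s then -∑ e ∈ X, spin (c e) else ∑ e ∈ X, spin (c e) := by
  unfold fiberSum
  rw [sum_fiberwise (X ×ˢ {s}) (fun p => comp p.1), sum_product]
  cases s <;> simp [spin_xor]

theorem exists_isPathColoring_sum_spin_eq_one [Fintype E] (hπ : ∀ s, Involutive (π s))
    {S T : Finset E} (hS : ∀ e ∈ S, π false e ∈ S) (hT : ∀ e ∈ T, π true e ∈ T)
    (hSodd : Odd #S) (hTodd : Odd #T) :
    ∃ c comp, IsPathColoring π c comp ∧ ∑ e ∈ S, spin (c e) = 1 ∧ ∑ e ∈ T, spin (c e) = 1 := by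
  obtain ⟨c, comp, h⟩ := exists_isPathColoring π hπ
  have hQS : ∀ p ∈ S ×ˢ {false}, (π p.2 p.1, p.2) ∈ S ×ˢ {false} := by simpa using hS
  have hQT : ∀ p ∈ T ×ˢ {true}, (π p.2 p.1, p.2) ∈ T ×ˢ {true} := by simpa using hT
  have hdisj : Disjoint (S ×ˢ {false}) (T ×ˢ {true}) := disjoint_product.2 (Or.inr (by simp))
  have hS' (c) : ∑ r, fiberSum c comp (S ×ˢ {false}) r = ∑ e ∈ S, spin (c e) :=
    sum_fiberSum_product_singleton c comp S false
  have hT' (c) : -∑ r, fiberSum c comp (T ×ˢ {true}) r = ∑ e ∈ T, spin (c e) := by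
    rw [sum_fiberSum_product_singleton, if_pos rfl, neg_neg]
  let v r := (fiberSum c comp (S ×ˢ {false}) r, -fiberSum c comp (T ×ˢ {true}) r)
  have hv : ∀ r ∈ univ, v r ∈ hexagon := fun r _ => by
    refine ⟨h.abs_fiberSum_le_one hπ hQS r,
      (abs_neg (fiberSum c comp _ r)).trans_le (h.abs_fiberSum_le_one hπ hQT r), ?_⟩
    rw [sub_neg_eq_add, ← fiberSum_union hdisj]
    refine h.abs_fiberSum_le_one hπ (fun p hp => ?_) r
    rcases mem_union.1 hp with hp | hp
    exacts [mem_union_left _ (hQS p hp), mem_union_right _ (hQT p hp)]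
  obtain ⟨φ, hφ⟩ := exists_sum_ite_neg_eq_one univ hv
    (by simpa only [v, Prod.fst_sum, hS'] using odd_sum_spin hSodd c)
    (by simpa only [v, Prod.snd_sum, sum_neg_distrib, hT'] using odd_sum_spin hTodd c)
  refine ⟨_, comp, h.xor_comp φ, ?_, ?_⟩
  · have h₁ : ∑ r, (if φ r then -v r else v r).1 = 1 := by rw [← Prod.fst_sum, hφ]
    rw [← hS', ← h₁]
    refine sum_congr rfl fun r _ => ?_
    rw [fiberSum_xor_comp]
    split_ifs <;> rfl
  · have h₂ : ∑ r, (if φ r then -v r else v r).2 = 1 := by rw [← Prod.snd_sum, hφ]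
    rw [← hT', ← h₂, ← sum_neg_distrib]
    refine sum_congr rfl fun r _ => ?_
    rw [fiberSum_xor_comp]
    split_ifs <;> simp [v]

end AlternatingColoring

open AlternatingColoring in
theorem exists_balanced_coloring_general {V E : Type*} [Fintype E]
    [DecidableEq V] (vs vt : E → V) (k i : ℕ) (hk : 1 ≤ k) (hi : 1 ≤ i)
    (hdeg : ∀ v, inDeg vt v ≤ 2 ∧ outDeg vs v ≤ 2 ∧
      (inDeg vt v ≠ 0 → outDeg vs v ≤ inDeg vt v))
    (hsrc : (Finset.univ.filter fun e => inDeg vt (vs e) = 0).card = 2 * k - 1)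
    (hsnk : (Finset.univ.filter fun e => outDeg vs (vt e) = 0).card = 2 * i - 1) :
    ∃ c : E → Bool, ValidColoring vs vt c ∧
      (Finset.univ.filter fun e => inDeg vt (vs e) = 0 ∧ c e = true).card = k ∧
      (Finset.univ.filter fun e => outDeg vs (vt e) = 0 ∧ c e = true).card = i := by
  classical
  obtain ⟨σ, hσ, hσvs, hσ_eq⟩ := exists_involutive_partner vs fun v => (hdeg v).2.1
  obtain ⟨τ, hτ, hτvt, hτ_eq⟩ := exists_involutive_partner vt fun v => (hdeg v).1
  obtain ⟨c, _, hc, hS, hT⟩ := exists_isPathColoring_sum_spin_eq_one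
    (π := fun s => if s then τ else σ) (S := {e | inDeg vt (vs e) = 0})
    (T := {e | outDeg vs (vt e) = 0}) (by simp [hσ, hτ]) (by simp [hσvs]) (by simp [hτvt])
    ⟨k - 1, by omega⟩ ⟨i - 1, by omega⟩
  refine ⟨c, ⟨fun e f hef h => ?_, fun e f hef h => ?_⟩, ?_, ?_⟩
  · have := hc.alternates true e
    simp only [if_true, hτ_eq e f hef h] at this
    exact (this hef.symm).symm
  · have := hc.alternates false e
    simp only [Bool.false_eq_true, if_false, hσ_eq e f hef h] at this
    exact (this hef.symm).symm
  · have := two_mul_card_filter_eq {e | inDeg vt (vs e) = 0} c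
    rw [← filter_filter]
    omega
  · have := two_mul_card_filter_eq {e | outDeg vs (vt e) = 0} c
    rw [← filter_filter]
    omega

/-- Proposition `hornprop`.  Let `Θ` be a finite directed
graph in which every source (vertex of in-degree `0`) has out-degree at most
`2`, and every other vertex has in-degree at most `2` and out-degree at most
its in-degree.  A *source-edge* is an edge emanating from a source; a
*sink-edge* is an edge entering a vertex of out-degree `0`.  If `Θ` has
exactly `2k−1` source-edges and `2i−1` sink-edges, then there is an
alternating `2`-coloring of the edges with exactly `k` red source-edges and
exactly `i` red sink-edges. -/
theorem exists_balanced_coloring {V E : Type*} [Fintype E] [DecidableEq E]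
    [DecidableEq V] (vs vt : E → V) (k i : ℕ) (hk : 1 ≤ k) (hi : 1 ≤ i)
    (hdeg : ∀ v, inDeg vt v ≤ 2 ∧ outDeg vs v ≤ 2 ∧
      (inDeg vt v ≠ 0 → outDeg vs v ≤ inDeg vt v))
    (hsrc : (Finset.univ.filter fun e => inDeg vt (vs e) = 0).card = 2 * k - 1)
    (hsnk : (Finset.univ.filter fun e => outDeg vs (vt e) = 0).card = 2 * i - 1) :
    ∃ c : E → Bool, ValidColoring vs vt c ∧
      (Finset.univ.filter fun e => inDeg vt (vs e) = 0 ∧ c e = true).card = k ∧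
      (Finset.univ.filter fun e => outDeg vs (vt e) = 0 ∧ c e = true).card = i :=
  exists_balanced_coloring_general vs vt k i hk hi hdeg hsrc hsnk
end
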